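/- arXiv:2103.12153 — 6 statements merged into one kernel-verified Lean document; each statement's English description precedes it below -/
import Mathlib

section
/- Let k be a positive integer and let G be a finite simple graph in which every cycle has length at least 2k+2. Then every induced subgraph of G that is a k-vine is contained (as a subgraph) in a unique maximal k-vine of G, namely the k-ball U_k(v) at the center v of the given k-vine: U_k(v) is a k-vine of G, it contains the given k-vine, and every k-vine of G containing the given k-vine is a subgraph of U_k(v). -/
open SimpleGraph

/-- The eccentricity (`ℕ∞`-valued) of a vertex: supremum of extended distances to
all vertices.  It is infinite if the graph is disconnected. -/
noncomputable def eccent {V : Type*} (G : SimpleGraph V) (v : V) : ℕ∞ :=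
  ⨆ w, G.edist v w

/-- The radius (`ℕ∞`-valued) of a graph: minimum eccentricity. -/
noncomputable def gradius {V : Type*} (G : SimpleGraph V) : ℕ∞ :=
  ⨅ v, _root_.eccent G v

/-- The diameter (`ℕ∞`-valued) of a graph: maximum distance between two vertices. -/
noncomputable def gdiam {V : Type*} (G : SimpleGraph V) : ℕ∞ :=
  ⨆ v, ⨆ w, G.edist v w

/-- Two graphs on `Fin n` have the same `k`-deck: there is a bijection `φ` between the
`k`-element vertex subsets such that for each subset `s` the subgraph induced by `s` in the
first graph is isomorphic to the subgraph induced by `φ s` in the second. -/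
def SameDeck {n : ℕ} (G H : SimpleGraph (Fin n)) (k : ℕ) : Prop :=
  ∃ φ : {s : Finset (Fin n) // s.card = k} ≃ {s : Finset (Fin n) // s.card = k},
    ∀ s : {s : Finset (Fin n) // s.card = k},
      Nonempty ((SimpleGraph.induce (↑s.1 : Set (Fin n)) G) ≃g
                (SimpleGraph.induce (↑(φ s).1 : Set (Fin n)) H))

/-- A `k`-vine: a tree with diameter exactly `2k`. -/
def IsVine {V : Type*} (k : ℕ) (A : SimpleGraph V) : Prop :=
  A.IsTree ∧ gdiam A = ((2 * k : ℕ) : ℕ∞)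

/-- A `k`-center of `G`: a vertex `v` such that some subgraph of `G` is a `k`-vine
with center `v` (i.e. `v` has eccentricity `k` in it). -/
def IsKCenter {V : Type*} (k : ℕ) (G : SimpleGraph V) (v : V) : Prop :=
  ∃ (B : G.Subgraph) (hv : v ∈ B.verts),
    IsVine k B.coe ∧ _root_.eccent B.coe ⟨v, hv⟩ = (k : ℕ∞)

/-- The `k`-ball at a vertex `v` of `G`: the subgraph induced by all vertices at
distance at most `k` from `v`. -/
def kBall {V : Type*} (G : SimpleGraph V) (v : V) (k : ℕ) : G.Subgraph :=
  (⊤ : G.Subgraph).induce {w | G.edist v w ≤ (k : ℕ∞)}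

/-!
Girth at least `2k + 2` means that two distinct paths with the same ends have total length at
least `2k + 2`. Inside the `k`-ball around `v` a vertex `u` therefore has at most one neighbour
that is not farther from `v` than `u`: each such neighbour is the penultimate vertex of a fixed
geodesic from `v` to `u`. A vertex of a cycle farthest from `v` would have two, so the ball is a
tree of radius `k` around `v`.

The vine `B` contains `x, y` with `d(v, x) = d(v, y) = k` and `d(x, y) = 2k`. In a tree, distances
are lengths of paths, so these distances persist in every tree containing `B`; this gives the ball
diameter `2k`. In a tree `T ⊇ B` of diameter `2k`, a vertex `w` with `d(v, w) > k` leaves `v` in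
a direction different from that of `x` or of `y`, and then `d(x, w)` or `d(y, w)` exceeds `2k`.
-/

namespace SimpleGraph

variable {V W : Type*} {G : SimpleGraph V} {H : SimpleGraph W} {u v w x y : V} {k : ℕ}

namespace Walk

lemma IsPath.append {p : G.Walk u v} {q : G.Walk v w} (hp : p.IsPath) (hq : q.IsPath)
    (h : ∀ x ∈ p.support, x ∈ q.support → x = v) : (p.append q).IsPath := by
  rw [isPath_def, support_append, List.nodup_append]
  refine ⟨hp.support_nodup, hq.support_nodup.tail, fun a ha b hb hab => ?_⟩
  subst hab
  have hv : v ∉ q.support.tail := by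
    have := hq.support_nodup
    rw [← cons_tail_support] at this
    exact (List.nodup_cons.mp this).1
  exact hv (h a ha (List.mem_of_mem_tail hb) ▸ hb)

lemma IsPath.eq_of_length_add_length_lt_egirth {p q : G.Walk u v} (hp : p.IsPath)
    (hq : q.IsPath) (h : ((p.length + q.length : ℕ) : ℕ∞) < G.egirth) : p = q := by
  by_contra hne
  obtain ⟨_, _, p', q', hp', hq', hc⟩ := hp.exists_isCycle_of_ne hq hne
  have hlen := G.egirth_le_length hc
  rw [length_append, length_reverse] at hlen
  have : p'.length + q'.length ≤ p.length + q.length :=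
    add_le_add (length_le_of_isSubwalk hp') (length_le_of_isSubwalk hq')
  exact absurd (hlen.trans_lt ((Nat.cast_le.mpr this).trans_lt h)) (lt_irrefl _)

end Walk

lemma Hom.edist_le (f : G →g H) (u w : V) : H.edist (f u) (f w) ≤ G.edist u w := by
  rcases eq_or_ne (G.edist u w) ⊤ with h | h
  · exact h ▸ le_top
  · obtain ⟨p, hp⟩ := exists_walk_of_edist_ne_top h
    exact hp ▸ (Walk.length_map f p ▸ SimpleGraph.edist_le (p.map f))

lemma exists_isPath_length_eq_of_edist_eq (h : G.edist u v = k) :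
    ∃ p : G.Walk u v, p.IsPath ∧ p.length = k := by
  obtain ⟨p, hp⟩ := exists_walk_of_edist_eq_coe h
  refine ⟨p, p.isPath_of_length_eq_dist ?_, hp⟩
  exact_mod_cast hp ▸ h ▸ p.reachable.coe_dist_eq_edist.symm

lemma exists_edist_eq_of_ediam_eq (hdiam : G.ediam = 2 * k) (hv : G.eccent v ≤ k) :
    ∃ x y, G.edist v x = k ∧ G.edist v y = k ∧ G.edist x y = 2 * k := by
  have : Nonempty V := ⟨v⟩
  obtain ⟨x, y, hxy⟩ := exists_edist_eq_ediam_of_ne_top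
    (hdiam ▸ (by exact_mod_cast ENat.natCast_ne_top (2 * k)) : G.ediam ≠ ⊤)
  rw [hdiam] at hxy
  have hvx := (eccent_le_iff v k).mp hv x
  have hvy := (eccent_le_iff v k).mp hv y
  have htri : (k : ℕ∞) + k ≤ G.edist v x + G.edist v y :=
    two_mul (k : ℕ∞) ▸ hxy ▸ edist_comm (u := v) ▸ G.edist_triangle
  refine ⟨x, y, le_antisymm hvx ?_, le_antisymm hvy ?_, hxy⟩
  · exact (ENat.add_le_add_iff_right (ENat.natCast_ne_top k)).mp (htri.trans (by gcongr))
  · exact (ENat.add_le_add_iff_left (ENat.natCast_ne_top k)).mp (htri.trans (by gcongr))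

section Acyclic

lemma IsAcyclic.edist_eq_length (hG : G.IsAcyclic) {p : G.Walk u v} (hp : p.IsPath) :
    G.edist u v = p.length := by
  obtain ⟨q, hq, hql⟩ := p.reachable.exists_path_of_dist
  obtain rfl : p = q := congrArg Subtype.val ((hG.subsingleton_path u v).elim ⟨p, hp⟩ ⟨q, hq⟩)
  rw [← p.reachable.coe_dist_eq_edist, hql]

lemma IsAcyclic.edist_map_eq (hH : H.IsAcyclic) {f : G →g H} (hf : Function.Injective f)
    (h : G.Reachable u v) : H.edist (f u) (f v) = G.edist u v := by
  obtain ⟨p, hp, hpl⟩ := h.exists_path_of_dist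
  rw [hH.edist_eq_length (hp.map hf), Walk.length_map, hpl, h.coe_dist_eq_edist]

lemma IsAcyclic.edist_eq_length_add_length (hG : G.IsAcyclic) {p : G.Walk v x} {q : G.Walk v y}
    (hp : p.IsPath) (hq : q.IsPath) (hpq : p.snd ≠ q.snd) :
    G.edist x y = (p.length + q.length : ℕ) := by
  classical
  have hpath : (p.reverse.append q).IsPath := by
    refine hp.reverse.append hq fun z hzp hzq => ?_
    rw [Walk.support_reverse, List.mem_reverse] at hzp
    by_contra hz
    have h : p.takeUntil z hzp = q.takeUntil z hzq := congrArg Subtype.val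
      ((hG.subsingleton_path v z).elim ⟨_, hp.takeUntil hzp⟩ ⟨_, hq.takeUntil hzq⟩)
    exact hpq (by rw [← Walk.snd_takeUntil hz p hzp, ← Walk.snd_takeUntil hz q hzq, h])
  rw [hG.edist_eq_length hpath, Walk.length_append, Walk.length_reverse]

lemma IsAcyclic.eccent_le_of_edist_eq (hG : G.IsAcyclic) (hdiam : G.ediam ≤ 2 * k)
    (hx : G.edist v x = k) (hy : G.edist v y = k) (hxy : G.edist x y = 2 * k) :
    G.eccent v ≤ k := by
  rw [eccent_le_iff]
  intro w
  by_contra! hw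
  obtain ⟨n, hn⟩ := ENat.ne_top_iff_exists.mp (edist_le_ediam.trans_lt
    (hdiam.trans_lt (by exact_mod_cast ENat.natCast_lt_top (2 * k)))).ne
  have hn2k : n ≤ 2 * k := by exact_mod_cast hn ▸ edist_le_ediam.trans hdiam
  have hnk : k < n := by exact_mod_cast hn ▸ hw
  obtain ⟨P, hP, hPl⟩ := exists_isPath_length_eq_of_edist_eq hn.symm
  have hsnd {z : V} {γ : G.Walk v z} (hγ : γ.IsPath) (hγk : γ.length = k) : γ.snd = P.snd := by
    by_contra hne
    have h := (hG.edist_eq_length_add_length hγ hP hne).symm.trans_le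
      (edist_le_ediam.trans hdiam)
    rw [hγk, hPl] at h
    norm_cast at h
    omega
  obtain ⟨α, hα, hαl⟩ := exists_isPath_length_eq_of_edist_eq hx
  obtain ⟨β, hβ, hβl⟩ := exists_isPath_length_eq_of_edist_eq hy
  -- `x` and `y` are then joined through the common second vertex of `α` and `β`
  have hxy' := hxy ▸ edist_le (α.tail.reverse.append
    (β.tail.copy ((hsnd hβ hβl).trans (hsnd hα hαl).symm) rfl))
  rw [Walk.length_append, Walk.length_reverse, Walk.length_copy, Walk.length_tail,
    Walk.length_tail, hαl, hβl] at hxy'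
  norm_cast at hxy'
  omega

end Acyclic

section Girth

lemma eq_penultimate_of_adj_of_dist_le (hG : 2 * k + 2 ≤ G.egirth) {γ : G.Walk v u}
    (hγ : γ.length = G.dist v u) (hγk : γ.length ≤ k) {a : V} (ha : G.Adj a u)
    (hau : G.dist v a ≤ G.dist v u) : a = γ.penultimate := by
  classical
  obtain ⟨δ, hδ, hδl⟩ := (γ.reachable.trans ha.symm.reachable).exists_path_of_dist
  have hu : u ∉ δ.support := fun hu => by
    have := δ.length_takeUntil_lt_length hu ha.ne'
    have := dist_le (δ.takeUntil u hu)
    omega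
  have hlen : (((δ.concat ha).length + γ.length : ℕ) : ℕ∞) < G.egirth := by
    refine lt_of_lt_of_le ?_ hG
    rw [Walk.length_concat]
    exact_mod_cast (show δ.length + 1 + γ.length < 2 * k + 2 by omega)
  rw [← (hδ.concat hu ha).eq_of_length_add_length_lt_egirth (γ.isPath_of_length_eq_dist hγ) hlen,
    Walk.penultimate_concat]

lemma Walk.IsCycle.exists_lt_edist (hG : 2 * k + 2 ≤ G.egirth) {c : G.Walk u u} (hc : c.IsCycle)
    (v : V) : ∃ x ∈ c.support, (k : ℕ∞) < G.edist v x := by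
  classical
  by_contra! hle
  have hreach (x) (hx : x ∈ c.support) : G.Reachable v x :=
    reachable_of_edist_ne_top ((hle x hx).trans_lt (ENat.natCast_lt_top k)).ne
  have hdist (x) (hx : x ∈ c.support) : G.dist v x ≤ k := by
    exact_mod_cast (hreach x hx).coe_dist_eq_edist ▸ hle x hx
  obtain ⟨x, hx, hmax⟩ := c.support.toFinset.exists_max_image (G.dist v) ⟨u, by simp⟩
  rw [List.mem_toFinset] at hx
  set d := c.rotate x hx
  have hd : d.IsCycle := hc.rotate hx
  have hmem (y) (hy : y ∈ d.support) : G.dist v y ≤ G.dist v x :=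
    hmax y (List.mem_toFinset.mpr ((c.mem_support_rotate_iff x hx).mp hy))
  obtain ⟨γ, -, hγ⟩ := (hreach x hx).exists_path_of_dist
  have h1 := eq_penultimate_of_adj_of_dist_le hG hγ (hγ ▸ hdist x hx)
    (d.adj_snd hd.not_nil).symm (hmem _ (d.getVert_mem_support 1))
  have h2 := eq_penultimate_of_adj_of_dist_le hG hγ (hγ ▸ hdist x hx)
    (d.adj_penultimate hd.not_nil) (hmem _ (d.getVert_mem_support _))
  exact hd.snd_ne_penultimate (h1.trans h2.symm)

lemma isAcyclic_induce_edist_le (hG : 2 * k + 2 ≤ G.egirth) (v : V) :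
    (G.induce {w | G.edist v w ≤ k}).IsAcyclic := by
  intro u c hc
  let f := Embedding.induce (G := G) {w | G.edist v w ≤ k}
  obtain ⟨x, hx, hlt⟩ :=
    ((Walk.isCycle_map_iff_of_injective (f := f.toHom) f.injective).mpr hc).exists_lt_edist hG v
  rw [Walk.support_map, List.mem_map] at hx
  obtain ⟨⟨y, hy⟩, -, rfl⟩ := hx
  exact (not_le.mpr hlt) hy

end Girth

lemma eccent_induce_edist_le (v : V) :
    (G.induce {w | G.edist v w ≤ k}).eccent ⟨v, by simp⟩ ≤ k := by
  classical
  rw [eccent_le_iff]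
  rintro ⟨w, hw⟩
  have hr : G.Reachable v w := reachable_of_edist_ne_top (hw.trans_lt (ENat.natCast_lt_top k)).ne
  obtain ⟨p, -, hp⟩ := hr.exists_path_of_dist
  have hpk : (p.length : ℕ∞) ≤ k := hp ▸ hr.coe_dist_eq_edist ▸ hw
  have hsupp (x) (hx : x ∈ p.support) : G.edist v x ≤ k :=
    ((edist_le (p.takeUntil x hx)).trans (by exact_mod_cast p.length_takeUntil_le_length hx)).trans
      hpk
  refine (edist_le (p.induce {w | G.edist v w ≤ k} hsupp)).trans ?_
  rwa [← Walk.length_map (Embedding.induce _).toHom, Walk.map_induce]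

end SimpleGraph

section kBall

variable {V : Type*} {G : SimpleGraph V} {v : V} {k : ℕ}

lemma kBall_coe : (kBall G v k).coe = G.induce {w | G.edist v w ≤ k} :=
  (induce_eq_coe_induce_top _).symm

lemma SimpleGraph.Subgraph.le_kBall {H : G.Subgraph} (hv : v ∈ H.verts)
    (h : H.coe.eccent ⟨v, hv⟩ ≤ k) : H ≤ kBall G v k :=
  H.le_induce_top_verts.trans <| Subgraph.induce_mono_right fun w hw =>
    (H.hom.edist_le ⟨v, hv⟩ ⟨w, hw⟩).trans (edist_le_eccent.trans h)

end kBall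

theorem vine_absorbed_in_kBall_general {V : Type*} (k : ℕ)
    (G : SimpleGraph V)
    (hgirth : ∀ (v : V) (c : G.Walk v v), c.IsCycle → 2 * k + 2 ≤ c.length)
    (B : G.Subgraph) (hB : IsVine k B.coe)
    (v : V) (hv : v ∈ B.verts) (hcent : _root_.eccent B.coe ⟨v, hv⟩ = (k : ℕ∞)) :
    IsVine k (kBall G v k).coe ∧ B ≤ kBall G v k ∧
      ∀ B' : G.Subgraph, IsVine k B'.coe → B ≤ B' → B' ≤ kBall G v k := by
  have hG : 2 * k + 2 ≤ G.egirth := le_egirth.mpr fun u c hc => by exact_mod_cast hgirth u c hc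
  obtain ⟨hBtree, hBdiam⟩ := hB
  obtain ⟨x, y, hx, hy, hxy⟩ := exists_edist_eq_of_ediam_eq (G := B.coe) (v := ⟨v, hv⟩)
    (by exact_mod_cast hBdiam) hcent.le
  have hdist {T : G.Subgraph} (hBT : B ≤ T) (hT : T.coe.IsAcyclic) (a b : B.verts) :
      T.coe.edist (Subgraph.inclusion hBT a) (Subgraph.inclusion hBT b) = B.coe.edist a b :=
    hT.edist_map_eq (Subgraph.inclusion.injective hBT) (hBtree.connected.preconnected a b)
  have hBball : B ≤ kBall G v k := Subgraph.le_kBall hv hcent.le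
  have hball : (kBall G v k).coe.IsAcyclic := by
    rw [kBall_coe]
    exact isAcyclic_induce_edist_le hG v
  refine ⟨?_, hBball, fun B' hB' hBB' => ?_⟩
  · have hdiam : (kBall G v k).coe.ediam = 2 * k := by
      refine le_antisymm ((ediam_le_two_mul_eccent ⟨v, hBball.1 hv⟩).trans ?_)
        (hxy ▸ hdist hBball hball x y ▸ edist_le_ediam)
      gcongr
      rw [kBall_coe]
      exact eccent_induce_edist_le v
    have : Nonempty (kBall G v k).verts := ⟨⟨v, hBball.1 hv⟩⟩
    refine ⟨⟨connected_of_ediam_ne_top ?_, hball⟩, by exact_mod_cast hdiam⟩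
    exact hdiam ▸ by exact_mod_cast ENat.natCast_ne_top (2 * k)
  · have hT := hB'.1.isAcyclic
    exact Subgraph.le_kBall (hBB'.1 hv) (hT.eccent_le_of_edist_eq (by exact_mod_cast hB'.2.le)
      (hdist hBB' hT _ _ ▸ hx) (hdist hBB' hT _ _ ▸ hy) (hdist hBB' hT _ _ ▸ hxy))

/-- In a graph with girth at least `2k+2`, every induced subgraph that is a `k`-vine is
contained in a unique maximal `k`-vine, namely the `k`-ball at its center `v`: the
`k`-ball at `v` is a `k`-vine of `G`, it contains the given `k`-vine, and every `k`-vine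
of `G` containing the given `k`-vine is a subgraph of the `k`-ball at `v`. -/
theorem vine_absorbed_in_kBall {V : Type*} [Fintype V] (k : ℕ) (hk : 1 ≤ k)
    (G : SimpleGraph V)
    (hgirth : ∀ (v : V) (c : G.Walk v v), c.IsCycle → 2 * k + 2 ≤ c.length)
    (B : G.Subgraph) (hBind : B.IsInduced) (hB : IsVine k B.coe)
    (v : V) (hv : v ∈ B.verts) (hcent : _root_.eccent B.coe ⟨v, hv⟩ = (k : ℕ∞)) :
    IsVine k (kBall G v k).coe ∧ B ≤ kBall G v k ∧
      ∀ B' : G.Subgraph, IsVine k B'.coe → B ≤ B' → B' ≤ kBall G v k :=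
  vine_absorbed_in_kBall_general k G hgirth B hB v hv hcent
end

section
/- Let ℱ be a class of finite simple graphs closed under isomorphism, and let n and ℓ be positive integers with ℓ < n. Suppose G and G′ are n-vertex graphs having the same (n−ℓ)-deck, ℱ is an absorbing family for both G and G′, and m(F,G) = m(F,G′) for every F ∈ ℱ having at least n−ℓ vertices. Then m(F,G) = m(F,G′) for every F ∈ ℱ. -/
open SimpleGraph

/-- Membership of a graph `A` (up to isomorphism) in a class `ℱ` of finite graphs,
where the class is represented by choosing, for each `m`, a set of graphs on `Fin m`. -/
def MemF (ℱ : ∀ m : ℕ, Set (SimpleGraph (Fin m))) {α : Type*} (A : SimpleGraph α) : Prop :=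
  ∃ (m : ℕ) (B : SimpleGraph (Fin m)), B ∈ ℱ m ∧ Nonempty (A ≃g B)

/-- `ℱ` is an absorbing family for `G`: every `ℱ`-subgraph of `G` (an induced subgraph
belonging to `ℱ`) is an induced subgraph of a unique maximal `ℱ`-subgraph of `G`. -/
def Absorbing (ℱ : ∀ m : ℕ, Set (SimpleGraph (Fin m))) {n : ℕ}
    (G : SimpleGraph (Fin n)) : Prop :=
  ∀ S : Finset (Fin n), MemF ℱ (SimpleGraph.induce (↑S : Set (Fin n)) G) →
    ∃! T : Finset (Fin n), S ⊆ T ∧ MemF ℱ (SimpleGraph.induce (↑T : Set (Fin n)) G) ∧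
      ∀ T' : Finset (Fin n), T ⊆ T' →
        MemF ℱ (SimpleGraph.induce (↑T' : Set (Fin n)) G) → T' = T

/-- `m(F, G)`: the number of vertex subsets `S` of `G` such that the induced subgraph
`G[S]` is isomorphic to `F` and is a maximal `ℱ`-subgraph of `G`. -/
noncomputable def mCount (ℱ : ∀ m : ℕ, Set (SimpleGraph (Fin m))) {j n : ℕ}
    (F : SimpleGraph (Fin j)) (G : SimpleGraph (Fin n)) : ℕ :=
  Nat.card {S : Finset (Fin n) //
    Nonempty ((SimpleGraph.induce (↑S : Set (Fin n)) G) ≃g F) ∧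
    MemF ℱ (SimpleGraph.induce (↑S : Set (Fin n)) G) ∧
    ∀ T : Finset (Fin n), S ⊆ T →
      MemF ℱ (SimpleGraph.induce (↑T : Set (Fin n)) G) → T = S}

/-!
Put `k = n - ℓ` and argue by downward induction on the order `m` of `F`, the case `m ≥ k` being
a hypothesis. For `m < k`, count the pairs `(s, S)` where `s` is a `k`-set of vertices and `S` is
a maximal `ℱ`-subgraph of `G[s]` isomorphic to `F`; the number of such pairs is read off the
`k`-deck. Group the pairs by the unique maximal `ℱ`-subgraph `T ⊇ S` of `G`. By absorption every
`ℱ`-subgraph containing `S` lies inside `T`, so the contribution of `T` depends only on the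
isomorphism type of `G[T]`. A maximal `T` with `|T| ≤ m` contributes `(n-m).choose (k-m)` if
`G[T] ≅ F` and nothing otherwise, and by induction the maximal `T` with `|T| > m` come in the same
isomorphism types, with the same multiplicities, in `G` and in `G'`. So the pair count is
`m(F,G) * (n-m).choose (k-m)` plus a term that is the same for `G` and `G'`.
-/

namespace Finset

theorem sum_eq_sum_of_card_fiber_eq {ι κ γ M : Type*} [AddCommMonoid M] [DecidableEq γ]
    {s : Finset ι} {t : Finset κ} {f : ι → γ} {g : κ → γ} {u : ι → M} {v : κ → M}
    (hcard : ∀ c, #{x ∈ s | f x = c} = #{y ∈ t | g y = c})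
    (huv : ∀ x ∈ s, ∀ y ∈ t, f x = g y → u x = v y) :
    ∑ x ∈ s, u x = ∑ y ∈ t, v y := by
  rw [← sum_fiberwise_of_maps_to (fun x hx => mem_union_left _ (mem_image_of_mem f hx)) u,
    ← sum_fiberwise_of_maps_to (fun y hy => mem_union_right _ (mem_image_of_mem g hy)) v]
  refine sum_congr rfl fun c _ => ?_
  let e := equivOfCardEq (hcard c)
  rw [← sum_coe_sort _ u, ← sum_coe_sort _ v]
  refine Fintype.sum_equiv e _ _ fun x => ?_
  obtain ⟨hx, hxc⟩ := mem_filter.1 x.2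
  obtain ⟨hy, hyc⟩ := mem_filter.1 (e x).2
  exact huv _ hx _ hy (hxc.trans hyc.symm)

theorem card_supersets_eq_choose {V : Type*} [Fintype V] [DecidableEq V] {S : Finset V} {k : ℕ}
    (hSk : #S ≤ k) :
    #{s : Finset V | #s = k ∧ S ⊆ s} = (Fintype.card V - #S).choose (k - #S) := by
  rw [← card_compl, ← card_powersetCard]
  refine card_nbij' (· \ S) (· ∪ S) (fun s hs => ?_) (fun u hu => ?_) (fun s hs => ?_)
    (fun u hu => ?_)
  · obtain ⟨hs, hSs⟩ := by simpa using hs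
    simp [mem_powersetCard, card_sdiff_of_subset hSs, hs]
  · obtain ⟨huS, hu⟩ := mem_powersetCard.1 hu
    have hdisj : Disjoint u S := by simpa [subset_compl_iff_disjoint_right] using huS
    simp [card_union_of_disjoint hdisj, hu, hSk]
  · exact sdiff_union_of_subset (mem_filter.1 hs).2.2
  · have hdisj : Disjoint u S := by
      simpa [subset_compl_iff_disjoint_right] using (mem_powersetCard.1 hu).1
    exact union_sdiff_cancel_right hdisj

theorem map_symm_map {V W : Type*} (σ : V ≃ W) (s : Finset V) :
    (s.map σ.toEmbedding).map σ.symm.toEmbedding = s := by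
  simp [map_map]

end Finset

open Finset

namespace AbsorbingFamily

open scoped Classical

variable {ℱ : ∀ m : ℕ, Set (SimpleGraph (Fin m))} {V W X : Type*}

theorem memF_congr {A : SimpleGraph V} {B : SimpleGraph W} (e : A ≃g B) :
    MemF ℱ A ↔ MemF ℱ B :=
  ⟨fun ⟨m, C, hC, ⟨f⟩⟩ => ⟨m, C, hC, ⟨e.symm.trans f⟩⟩,
    fun ⟨m, C, hC, ⟨f⟩⟩ => ⟨m, C, hC, ⟨e.trans f⟩⟩⟩

theorem card_eq_of_iso {m : ℕ} {G : SimpleGraph V} {S : Finset V} {F : SimpleGraph (Fin m)}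
    (e : G.induce (S : Set V) ≃g F) : #S = m := by
  simpa using Fintype.card_congr e.toEquiv

variable (ℱ) in
def IsFSet (G : SimpleGraph V) (S : Finset V) : Prop :=
  MemF ℱ (G.induce (S : Set V))

variable (ℱ) in
def IsMaxFSetIn (G : SimpleGraph V) (s S : Finset V) : Prop :=
  S ⊆ s ∧ IsFSet ℱ G S ∧ ∀ U, S ⊆ U → U ⊆ s → IsFSet ℱ G U → U = S

variable (ℱ) in
noncomputable def maxFSets [Fintype V] (G : SimpleGraph V) : Finset (Finset V) :=
  {T | IsMaxFSetIn ℱ G univ T}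

theorem isMaxFSetIn_iff_subset [Fintype V] {G : SimpleGraph V} {s T : Finset V}
    (hT : T ∈ maxFSets ℱ G) : IsMaxFSetIn ℱ G s T ↔ T ⊆ s := by
  obtain ⟨-, hTF, hmax⟩ := (mem_filter.1 hT).2
  exact ⟨fun h => h.1, fun h => ⟨h, hTF, fun U hTU _ hU => hmax U hTU (subset_univ U) hU⟩⟩

theorem isFSet_of_mem_maxFSets [Fintype V] {G : SimpleGraph V} {T : Finset V}
    (hT : T ∈ maxFSets ℱ G) : IsFSet ℱ G T :=
  (mem_filter.1 hT).2.2.1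

theorem mCount_eq_card {n m : ℕ} (F : SimpleGraph (Fin m)) (G : SimpleGraph (Fin n)) :
    mCount ℱ F G = #((maxFSets ℱ G).filter fun T : Finset (Fin n) =>
      Nonempty (G.induce (T : Set (Fin n)) ≃g F)) := by
  rw [mCount, Nat.card_eq_fintype_card, Fintype.card_subtype, maxFSets, filter_filter]
  refine congrArg card (filter_congr fun T _ => ?_)
  simp only [IsMaxFSetIn, IsFSet, subset_univ, true_implies, true_and]
  tauto

def IsPartialIso (σ : V ≃ W) (G : SimpleGraph V) (G' : SimpleGraph W) (s : Finset V) : Prop :=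
  ∀ x ∈ s, ∀ y ∈ s, G'.Adj (σ x) (σ y) ↔ G.Adj x y

namespace IsPartialIso

variable {σ : V ≃ W} {G : SimpleGraph V} {G' : SimpleGraph W} {s t : Finset V}

theorem mono (h : IsPartialIso σ G G' s) (hts : t ⊆ s) : IsPartialIso σ G G' t :=
  fun x hx y hy => h x (hts hx) y (hts hy)

theorem symm (h : IsPartialIso σ G G' s) : IsPartialIso σ.symm G' G (s.map σ.toEmbedding) := by
  simp only [IsPartialIso, mem_map_equiv]
  intro x hx y hy
  simpa using (h _ hx _ hy).symm

def induceIso (h : IsPartialIso σ G G' s) :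
    G.induce (s : Set V) ≃g G'.induce (s.map σ.toEmbedding : Set W) where
  toEquiv := σ.subtypeEquiv fun x => by simp
  map_rel_iff' {x y} := h x x.2 y y.2

theorem isFSet_map_iff (h : IsPartialIso σ G G' s) (hts : t ⊆ s) :
    IsFSet ℱ G' (t.map σ.toEmbedding) ↔ IsFSet ℱ G t :=
  (memF_congr (h.mono hts).induceIso).symm

theorem nonempty_iso_map_iff {F : SimpleGraph X} (h : IsPartialIso σ G G' s) (hts : t ⊆ s) :
    Nonempty (G'.induce (t.map σ.toEmbedding : Set W) ≃g F) ↔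
      Nonempty (G.induce (t : Set V) ≃g F) :=
  ⟨fun ⟨f⟩ => ⟨(h.mono hts).induceIso.trans f⟩,
    fun ⟨f⟩ => ⟨(h.mono hts).induceIso.symm.trans f⟩⟩

end IsPartialIso

theorem IsMaxFSetIn.map {σ : V ≃ W} {G : SimpleGraph V} {G' : SimpleGraph W} {s S T : Finset V}
    (hσ : IsPartialIso σ G G' T) (hST : S ⊆ T)
    (hT : ∀ U, S.map σ.toEmbedding ⊆ U → U ⊆ s.map σ.toEmbedding → IsFSet ℱ G' U →
      U ⊆ T.map σ.toEmbedding)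
    (h : IsMaxFSetIn ℱ G s S) :
    IsMaxFSetIn ℱ G' (s.map σ.toEmbedding) (S.map σ.toEmbedding) := by
  obtain ⟨hSs, hS, hmax⟩ := h
  refine ⟨map_subset_map.2 hSs, (hσ.isFSet_map_iff hST).2 hS, fun U hSU hUs hU => ?_⟩
  have hUT := hT U hSU hUs hU
  rw [← map_symm_map σ.symm U, Equiv.symm_symm] at hSU hUs hUT hU ⊢
  rw [map_subset_map] at hSU hUs hUT
  rw [hmax _ hSU hUs ((hσ.isFSet_map_iff hUT).1 hU)]

theorem isMaxFSetIn_map_iff {σ : V ≃ W} {G : SimpleGraph V} {G' : SimpleGraph W}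
    {s S T : Finset V} (hσ : IsPartialIso σ G G' T)
    (hT : ∀ U, S ⊆ U → U ⊆ s → IsFSet ℱ G U → U ⊆ T)
    (hT' : ∀ U, S.map σ.toEmbedding ⊆ U → U ⊆ s.map σ.toEmbedding → IsFSet ℱ G' U →
      U ⊆ T.map σ.toEmbedding) :
    IsMaxFSetIn ℱ G s S ↔ IsMaxFSetIn ℱ G' (s.map σ.toEmbedding) (S.map σ.toEmbedding) := by
  refine ⟨fun h => h.map hσ (hT S subset_rfl h.1 h.2.1) hT', fun h => ?_⟩
  have hST := hT' _ subset_rfl h.1 h.2.1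
  simpa only [map_symm_map] using
    h.map hσ.symm hST (by simpa only [map_symm_map] using hT)

theorem exists_perm_isPartialIso [Finite V] {G G' : SimpleGraph V} {s t : Finset V}
    (e : G.induce (s : Set V) ≃g G'.induce (t : Set V)) :
    ∃ σ : Equiv.Perm V, s.map σ.toEmbedding = t ∧ IsPartialIso σ G G' s := by
  have hσ : ∀ x (hx : x ∈ s), e.toEquiv.extendSubtype x = e ⟨x, hx⟩ :=
    e.toEquiv.extendSubtype_apply_of_mem
  refine ⟨e.toEquiv.extendSubtype, eq_of_subset_of_card_le ?_ ?_, fun x hx y hy => ?_⟩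
  · rintro _ hy
    obtain ⟨x, hx, rfl⟩ := mem_map.1 hy
    exact e.toEquiv.extendSubtype_mem x hx
  · simpa using (Fintype.card_congr e.toEquiv).ge
  · rw [hσ x hx, hσ y hy]
    exact e.map_adj_iff

/-- The isomorphism class of `H`, encoded as the set of its copies on each `Fin q`. -/
def isoClass (H : SimpleGraph V) (q : ℕ) : Set (SimpleGraph (Fin q)) :=
  {B | Nonempty (H ≃g B)}

theorem isoClass_eq_iff [Finite V] {H : SimpleGraph V} {H' : SimpleGraph W} :
    isoClass H = isoClass H' ↔ Nonempty (H ≃g H') := by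
  refine ⟨fun h => ?_, fun ⟨e⟩ => ?_⟩
  · have e := SimpleGraph.Iso.map (Finite.equivFin V) H
    obtain ⟨f⟩ : _ ∈ isoClass H' _ := by rw [← h]; exact ⟨e⟩
    exact ⟨e.trans f.symm⟩
  · funext q
    ext B
    exact ⟨fun ⟨f⟩ => ⟨e.symm.trans f⟩, fun ⟨f⟩ => ⟨e.trans f⟩⟩

section Counting

variable [Fintype V] {G : SimpleGraph V} {k : ℕ}

variable (ℱ) in
noncomputable def hostCount (G : SimpleGraph V) (k : ℕ) (S : Finset V) : ℕ :=
  #{s : Finset V | #s = k ∧ IsMaxFSetIn ℱ G s S}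

variable (ℱ) in
noncomputable def pairCountBelow (F : SimpleGraph X) (G : SimpleGraph V) (k : ℕ)
    (T : Finset V) : ℕ :=
  ∑ S ∈ univ.filter (fun S : Finset V =>
      S ⊆ T ∧ IsFSet ℱ G S ∧ Nonempty (G.induce (S : Set V) ≃g F)),
    hostCount ℱ G k S

variable (ℱ) in
noncomputable def pairCount (F : SimpleGraph X) (G : SimpleGraph V) (k : ℕ) : ℕ :=
  ∑ s : {s : Finset V // #s = k},
    #(univ.filter fun S : Finset V =>
      IsMaxFSetIn ℱ G s S ∧ Nonempty (G.induce (S : Set V) ≃g F))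

theorem pairCount_eq_sum_hostCount (F : SimpleGraph X) :
    pairCount ℱ F G k = ∑ S ∈ univ.filter (fun S : Finset V =>
      IsFSet ℱ G S ∧ Nonempty (G.induce (S : Set V) ≃g F)), hostCount ℱ G k S := by
  rw [pairCount, ← sum_subtype (univ.filter fun s : Finset V => #s = k) (by simp)
    (fun s => #(univ.filter fun S : Finset V =>
      IsMaxFSetIn ℱ G s S ∧ Nonempty (G.induce (S : Set V) ≃g F)))]
  simp only [hostCount, card_eq_sum_ones (filter _ _)]
  exact sum_comm' fun s S => by
    simp only [mem_filter, mem_univ, true_and]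
    exact ⟨fun h => ⟨⟨h.1, h.2.1⟩, h.2.1.2.1, h.2.2⟩, fun h => ⟨h.1.1, h.1.2, h.2.2⟩⟩

theorem pairCountBelow_of_card_le {m : ℕ} {F : SimpleGraph (Fin m)} {T : Finset V}
    (hT : T ∈ maxFSets ℱ G) (hTm : #T ≤ m) (hmk : m ≤ k) :
    pairCountBelow ℱ F G k T =
      if Nonempty (G.induce (T : Set V) ≃g F) then (Fintype.card V - m).choose (k - m)
      else 0 := by
  have hbelow : univ.filter (fun S : Finset V =>
      S ⊆ T ∧ IsFSet ℱ G S ∧ Nonempty (G.induce (S : Set V) ≃g F)) =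
      ({T} : Finset (Finset V)).filter fun S : Finset V =>
        Nonempty (G.induce (S : Set V) ≃g F) := by
    ext S
    simp only [mem_filter, mem_univ, true_and, mem_singleton]
    constructor
    · rintro ⟨hST, -, ⟨e⟩⟩
      exact ⟨eq_of_subset_of_card_le hST (card_eq_of_iso e ▸ hTm), ⟨e⟩⟩
    · rintro ⟨rfl, hS⟩
      exact ⟨subset_rfl, isFSet_of_mem_maxFSets hT, hS⟩
  rw [pairCountBelow, hbelow, sum_filter, sum_singleton]
  split_ifs with hiso
  · obtain ⟨e⟩ := hiso
    obtain rfl := card_eq_of_iso e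
    rw [hostCount, ← card_supersets_eq_choose hmk]
    exact congrArg card (filter_congr fun s _ => Iff.rfl.and (isMaxFSetIn_iff_subset hT))
  · rfl

end Counting

theorem card_isMaxFSetIn_eq_of_iso [Fintype V] {G G' : SimpleGraph V} {s t : Finset V}
    (F : SimpleGraph X) (e : G.induce (s : Set V) ≃g G'.induce (t : Set V)) :
    #(univ.filter fun S : Finset V =>
        IsMaxFSetIn ℱ G s S ∧ Nonempty (G.induce (S : Set V) ≃g F)) =
      #(univ.filter fun S : Finset V =>
        IsMaxFSetIn ℱ G' t S ∧ Nonempty (G'.induce (S : Set V) ≃g F)) := by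
  obtain ⟨σ, rfl, hσ⟩ := exists_perm_isPartialIso e
  refine card_equiv σ.finsetCongr fun S => ?_
  simp only [mem_filter, mem_univ, true_and, Equiv.finsetCongr_apply]
  rw [← isMaxFSetIn_map_iff hσ (fun U _ hUs _ => hUs) (fun U _ hUs _ => hUs)]
  exact and_congr_right fun h => (hσ.nonempty_iso_map_iff h.1).symm

theorem pairCount_eq_of_sameDeck {n k : ℕ} {G G' : SimpleGraph (Fin n)} (F : SimpleGraph X)
    (hdeck : SameDeck G G' k) : pairCount ℱ F G k = pairCount ℱ F G' k := by
  obtain ⟨φ, hφ⟩ := hdeck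
  exact Fintype.sum_equiv φ _ _ fun s => card_isMaxFSetIn_eq_of_iso F (hφ s).some

section Absorbing

variable {n : ℕ} {G G' : SimpleGraph (Fin n)} {S T U : Finset (Fin n)}

theorem existsUnique_maxFSets_superset (habs : Absorbing ℱ G) (hS : IsFSet ℱ G S) :
    ∃! T, T ∈ maxFSets ℱ G ∧ S ⊆ T := by
  simpa [maxFSets, IsMaxFSetIn, IsFSet, and_comm, and_assoc] using habs S hS

theorem card_maxFSets_superset (habs : Absorbing ℱ G) (hS : IsFSet ℱ G S) :
    #((maxFSets ℱ G).filter fun T : Finset (Fin n) => S ⊆ T) = 1 := by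
  obtain ⟨T, hT, huniq⟩ := existsUnique_maxFSets_superset habs hS
  exact card_eq_one.2 ⟨T, eq_singleton_iff_unique_mem.2
    ⟨mem_filter.2 hT, fun T' hT' => huniq T' (mem_filter.1 hT')⟩⟩

theorem subset_of_mem_maxFSets (habs : Absorbing ℱ G) (hS : IsFSet ℱ G S)
    (hT : T ∈ maxFSets ℱ G) (hST : S ⊆ T) (hSU : S ⊆ U) (hU : IsFSet ℱ G U) : U ⊆ T := by
  obtain ⟨T', ⟨hT', hUT'⟩, -⟩ := existsUnique_maxFSets_superset habs hU
  rwa [(existsUnique_maxFSets_superset habs hS).unique ⟨hT', hSU.trans hUT'⟩ ⟨hT, hST⟩]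
    at hUT'

theorem pairCount_eq_sum_pairCountBelow (habs : Absorbing ℱ G) (F : SimpleGraph X) (k : ℕ) :
    pairCount ℱ F G k = ∑ T ∈ maxFSets ℱ G, pairCountBelow ℱ F G k T := by
  rw [pairCount_eq_sum_hostCount]
  unfold pairCountBelow
  rw [sum_comm' (t' := univ.filter fun S : Finset (Fin n) =>
      IsFSet ℱ G S ∧ Nonempty (G.induce (S : Set (Fin n)) ≃g F))
    (s' := fun S => (maxFSets ℱ G).filter fun T : Finset (Fin n) => S ⊆ T)
    (fun T S => by simp only [mem_filter, mem_univ, true_and]; tauto)]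
  refine sum_congr rfl fun S hS => ?_
  rw [sum_const, card_maxFSets_superset habs (mem_filter.1 hS).2.1, one_smul]

theorem pairCountBelow_eq_of_iso (habs : Absorbing ℱ G) (habs' : Absorbing ℱ G')
    (hT : T ∈ maxFSets ℱ G) (hT' : U ∈ maxFSets ℱ G') (F : SimpleGraph X) (k : ℕ)
    (e : G.induce (T : Set (Fin n)) ≃g G'.induce (U : Set (Fin n))) :
    pairCountBelow ℱ F G k T = pairCountBelow ℱ F G' k U := by
  obtain ⟨σ, rfl, hσ⟩ := exists_perm_isPartialIso e
  refine sum_equiv σ.finsetCongr (fun S => ?_) (fun S hS => ?_)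
  · simp only [mem_filter, mem_univ, true_and, Equiv.finsetCongr_apply, map_subset_map]
    exact and_congr_right fun hST =>
      (hσ.isFSet_map_iff hST).symm.and (hσ.nonempty_iso_map_iff hST).symm
  · obtain ⟨hST, hS, -⟩ := by simpa using hS
    refine card_equiv σ.finsetCongr fun s => ?_
    simp only [mem_filter, mem_univ, true_and]
    rw [Equiv.finsetCongr_apply, card_map]
    exact Iff.rfl.and <| isMaxFSetIn_map_iff hσ
      (fun U hSU _ hU => subset_of_mem_maxFSets habs hS hT hST hSU hU)
      (fun U hSU _ hU => subset_of_mem_maxFSets habs' ((hσ.isFSet_map_iff hST).2 hS) hT'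
        (map_subset_map.2 hST) hSU hU)

theorem sum_pairCountBelow_of_card_le {m k : ℕ} (F : SimpleGraph (Fin m)) (hmk : m ≤ k) :
    ∑ T ∈ (maxFSets ℱ G).filter (fun T : Finset (Fin n) => #T ≤ m),
        pairCountBelow ℱ F G k T = mCount ℱ F G * (n - m).choose (k - m) := by
  rw [sum_congr rfl fun T hT => by
      simpa using pairCountBelow_of_card_le (mem_filter.1 hT).1 (mem_filter.1 hT).2 hmk,
    ← sum_filter, sum_const, smul_eq_mul, mCount_eq_card, filter_filter]
  congr 2
  exact filter_congr fun T _ => ⟨fun h => h.2, fun ⟨e⟩ => ⟨(card_eq_of_iso e).le, ⟨e⟩⟩⟩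

theorem card_filter_isoClass_eq {m q : ℕ} (B : SimpleGraph (Fin q)) (hmq : m < q) :
    #(((maxFSets ℱ G).filter fun T : Finset (Fin n) => m < #T).filter
        fun T : Finset (Fin n) => isoClass (G.induce (T : Set (Fin n))) = isoClass B) =
      mCount ℱ B G := by
  rw [mCount_eq_card, filter_filter]
  refine congrArg card (filter_congr fun T _ => ?_)
  rw [isoClass_eq_iff]
  exact ⟨fun h => h.2, fun ⟨e⟩ => ⟨(card_eq_of_iso e).symm ▸ hmq, ⟨e⟩⟩⟩

theorem sum_pairCountBelow_eq (habs : Absorbing ℱ G) (habs' : Absorbing ℱ G') {m : ℕ}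
    (F : SimpleGraph X) (k : ℕ)
    (hcount : ∀ (q : ℕ) (B : SimpleGraph (Fin q)), B ∈ ℱ q → m < q →
      mCount ℱ B G = mCount ℱ B G') :
    ∑ T ∈ (maxFSets ℱ G).filter (fun T : Finset (Fin n) => m < #T),
        pairCountBelow ℱ F G k T =
      ∑ T ∈ (maxFSets ℱ G').filter (fun T : Finset (Fin n) => m < #T),
        pairCountBelow ℱ F G' k T := by
  refine sum_eq_sum_of_card_fiber_eq
    (f := fun T : Finset (Fin n) => isoClass (G.induce (T : Set (Fin n))))
    (g := fun T : Finset (Fin n) => isoClass (G'.induce (T : Set (Fin n)))) (fun c => ?_)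
    (fun T hT U hU h => pairCountBelow_eq_of_iso habs habs' (mem_filter.1 hT).1
      (mem_filter.1 hU).1 F k (isoClass_eq_iff.1 h).some)
  by_cases hc : ∃ (q : ℕ) (B : SimpleGraph (Fin q)), B ∈ ℱ q ∧ m < q ∧ isoClass B = c
  · obtain ⟨q, B, hB, hmq, rfl⟩ := hc
    rw [card_filter_isoClass_eq B hmq, card_filter_isoClass_eq B hmq, hcount q B hB hmq]
  · have hempty : ∀ H : SimpleGraph (Fin n), ∀ T ∈ (maxFSets ℱ H).filter
        (fun T : Finset (Fin n) => m < #T), isoClass (H.induce (T : Set (Fin n))) ≠ c := by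
      rintro H T hT rfl
      obtain ⟨hT, hmT⟩ := mem_filter.1 hT
      obtain ⟨q, B, hB, ⟨e⟩⟩ := isFSet_of_mem_maxFSets hT
      exact hc ⟨q, B, hB, card_eq_of_iso e ▸ hmT, (isoClass_eq_iff.2 ⟨e⟩).symm⟩
    rw [filter_false_of_mem (hempty G), filter_false_of_mem (hempty G')]

theorem mCount_eq_of_sameDeck (habs : Absorbing ℱ G) (habs' : Absorbing ℱ G') {k m : ℕ}
    (hdeck : SameDeck G G' k) (hmk : m < k) (hkn : k ≤ n)
    (hcount : ∀ (q : ℕ) (B : SimpleGraph (Fin q)), B ∈ ℱ q → m < q →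
      mCount ℱ B G = mCount ℱ B G')
    (F : SimpleGraph (Fin m)) : mCount ℱ F G = mCount ℱ F G' := by
  have hsplit : ∀ H : SimpleGraph (Fin n), Absorbing ℱ H →
      pairCount ℱ F H k = mCount ℱ F H * (n - m).choose (k - m) +
        ∑ T ∈ (maxFSets ℱ H).filter (fun T : Finset (Fin n) => m < #T),
          pairCountBelow ℱ F H k T := fun H habsH => by
    rw [pairCount_eq_sum_pairCountBelow habsH, ← sum_pairCountBelow_of_card_le F hmk.le,
      ← sum_filter_add_sum_filter_not _ (fun T : Finset (Fin n) => #T ≤ m)]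
    simp only [not_le]
  have h := pairCount_eq_of_sameDeck (ℱ := ℱ) F hdeck
  rw [hsplit G habs, hsplit G' habs', sum_pairCountBelow_eq habs habs' F k hcount] at h
  exact Nat.eq_of_mul_eq_mul_right (Nat.choose_pos (by omega)) (Nat.add_right_cancel h)

end Absorbing

end AbsorbingFamily

theorem absorbing_family_counting_general (ℱ : ∀ m : ℕ, Set (SimpleGraph (Fin m)))
    (n ℓ : ℕ)
    (G G' : SimpleGraph (Fin n)) (hdeck : SameDeck G G' (n - ℓ))
    (habs : Absorbing ℱ G) (habs' : Absorbing ℱ G')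
    (hbig : ∀ (m : ℕ) (F : SimpleGraph (Fin m)), F ∈ ℱ m → n - ℓ ≤ m →
      mCount ℱ F G = mCount ℱ F G') :
    ∀ (m : ℕ) (F : SimpleGraph (Fin m)), F ∈ ℱ m → mCount ℱ F G = mCount ℱ F G' := by
  refine Nat.strong_decreasing_induction ⟨n - ℓ, fun m hm F hF => hbig m F hF hm.le⟩
    fun m ih F hF => ?_
  rcases le_or_gt (n - ℓ) m with hm | hm
  · exact hbig m F hF hm
  · exact AbsorbingFamily.mCount_eq_of_sameDeck habs habs' hdeck hm (Nat.sub_le n ℓ)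
      (fun q B hB hq => ih q hq B hB) F

/-- The counting lemma: if `ℱ` is an isomorphism-closed absorbing family for both `G`
and `G'`, the graphs have the same `(n-ℓ)`-deck, and `m(F,G) = m(F,G')` for every
`F ∈ ℱ` with at least `n-ℓ` vertices, then `m(F,G) = m(F,G')` for all `F ∈ ℱ`. -/
theorem absorbing_family_counting (ℱ : ∀ m : ℕ, Set (SimpleGraph (Fin m)))
    (hiso : ∀ (m m' : ℕ) (B : SimpleGraph (Fin m)) (B' : SimpleGraph (Fin m')),
      B ∈ ℱ m → Nonempty (B ≃g B') → B' ∈ ℱ m')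
    (n ℓ : ℕ) (hℓ : 1 ≤ ℓ) (hn : ℓ < n)
    (G G' : SimpleGraph (Fin n)) (hdeck : SameDeck G G' (n - ℓ))
    (habs : Absorbing ℱ G) (habs' : Absorbing ℱ G')
    (hbig : ∀ (m : ℕ) (F : SimpleGraph (Fin m)), F ∈ ℱ m → n - ℓ ≤ m →
      mCount ℱ F G = mCount ℱ F G') :
    ∀ (m : ℕ) (F : SimpleGraph (Fin m)), F ∈ ℱ m → mCount ℱ F G = mCount ℱ F G' :=
  absorbing_family_counting_general ℱ n ℓ G G' hdeck habs habs' hbig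
end

section
/- Let n and ℓ be positive integers with n > 2ℓ. If G is an n-vertex simple graph in which every connected component has at most n−ℓ vertices, then every n-vertex simple graph having the same (n−ℓ)-deck as G is isomorphic to G. -/
open SimpleGraph

/-!
By Kelly's lemma, the `k`-deck of an `n`-vertex graph (`k = n - ℓ`) determines, for every
graph `Q` on at most `k` vertices, the number of induced copies of `Q`. Since `n < 2k`, every
connected induced `k`-vertex subgraph of `G` is a whole component and there is at most one of
them, while a component of `H` with more than `k` vertices would contain two; so the components
of `H` also have at most `k` vertices. A connected induced subgraph lies inside a single
component, so the number of components isomorphic to a connected `Q` is the number of induced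
copies of `Q` minus the copies inside larger components; by downward induction on `|Q|` these
numbers agree for `G` and `H`. Matching components of the same isomorphism type then glues
to an isomorphism `G ≃g H`.
-/

open Finset

section Fibers

variable {α β γ M : Type*} [Fintype α] [Fintype β] [DecidableEq γ] {f : α → γ} {g : β → γ}

theorem sum_comp_eq_of_card_fiber_eq [AddCommMonoid M] {w : γ → M}
    (h : ∀ c, w c ≠ 0 → #{a | f a = c} = #{b | g b = c}) :
    ∑ a, w (f a) = ∑ b, w (g b) := by
  set T := univ.image f ∪ univ.image g
  have hf : ∀ a ∈ univ, f a ∈ T := fun a _ => mem_union_left _ (mem_image_of_mem f (mem_univ a))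
  have hg : ∀ b ∈ univ, g b ∈ T := fun b _ => mem_union_right _ (mem_image_of_mem g (mem_univ b))
  rw [← sum_fiberwise_of_maps_to' hf, ← sum_fiberwise_of_maps_to' hg]
  refine sum_congr rfl fun c _ => ?_
  rw [sum_const, sum_const]
  by_cases hc : w c = 0
  · simp [hc]
  · rw [h c hc]

theorem exists_equiv_of_card_fiber_eq (h : ∀ c, #{a | f a = c} = #{b | g b = c}) :
    ∃ e : α ≃ β, ∀ a, g (e a) = f a := by
  have hfib : ∀ c, {a // f a = c} ≃ {b // g b = c} := fun c =>
    Fintype.equivOfCardEq (by rw [Fintype.card_subtype, Fintype.card_subtype, h c])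
  exact ⟨Equiv.ofFiberEquiv hfib, Equiv.ofFiberEquiv_map hfib⟩

end Fibers

namespace SimpleGraph

open scoped Classical

def finGraphIsoSetoid : Setoid (Σ m : ℕ, SimpleGraph (Fin m)) where
  r X Y := Nonempty (X.2 ≃g Y.2)
  iseqv := ⟨fun _ => ⟨Iso.refl⟩, fun ⟨e⟩ => ⟨e.symm⟩, fun ⟨e⟩ ⟨f⟩ => ⟨e.trans f⟩⟩

abbrev GraphClass : Type := Quotient finGraphIsoSetoid

section IsoClass

variable {V W : Type*}

noncomputable def isoClass [Finite V] (G : SimpleGraph V) : GraphClass :=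
  ⟦⟨Nat.card V, G.comap (Finite.equivFin V).symm⟩⟧

theorem isoClass_eq_iff [Finite V] [Finite W] {G : SimpleGraph V} {H : SimpleGraph W} :
    isoClass G = isoClass H ↔ Nonempty (G ≃g H) := by
  have eG := Iso.comap (Finite.equivFin V).symm G
  have eH := Iso.comap (Finite.equivFin W).symm H
  exact Quotient.eq.trans ⟨fun ⟨e⟩ => ⟨(eG.symm.trans e).trans eH⟩,
    fun ⟨e⟩ => ⟨(eG.trans e).trans eH.symm⟩⟩

theorem isoClass_mk (X : Σ m : ℕ, SimpleGraph (Fin m)) : isoClass X.2 = ⟦X⟧ :=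
  Quotient.sound ⟨Iso.comap (Finite.equivFin (Fin X.1)).symm X.2⟩

theorem GraphClass.exists_isoClass_eq (Q : GraphClass) :
    ∃ (m : ℕ) (X : SimpleGraph (Fin m)), isoClass X = Q :=
  Q.inductionOn fun X => ⟨X.1, X.2, isoClass_mk X⟩

def GraphClass.card : GraphClass → ℕ :=
  Quotient.lift (fun X => X.1) fun X Y ⟨e⟩ => by
    simpa using Fintype.card_congr e.toEquiv

@[simp]
theorem card_isoClass [Finite V] (G : SimpleGraph V) : (isoClass G).card = Nat.card V := rfl

end IsoClass

theorem isoClass_induce_map {V W : Type*} [Finite V] [Finite W]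
    {G : SimpleGraph V} {H : SimpleGraph W} (f : G ↪g H) (s : Finset V) :
    isoClass (H.induce ↑(s.map f.toEmbedding)) = isoClass (G.induce ↑s) := by
  rw [Finset.coe_map]
  refine isoClass_eq_iff.mpr ⟨(?_ : G.induce ↑s ≃g _).symm⟩
  exact { toEquiv := Equiv.Set.image f _ f.injective
          map_rel_iff' := f.map_adj_iff }

section InducedCount

variable {V W : Type*} [Fintype V] [Fintype W]

noncomputable def inducedCount (G : SimpleGraph V) (Q : GraphClass) : ℕ :=
  #{s : Finset V | isoClass (G.induce ↑s) = Q}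

theorem inducedCount_congr {G : SimpleGraph V} {H : SimpleGraph W} (e : G ≃g H)
    (Q : GraphClass) : inducedCount G Q = inducedCount H Q := by
  refine card_nbij' (·.map e.toEquiv.toEmbedding) (·.map e.symm.toEquiv.toEmbedding) ?_ ?_ ?_ ?_
  · intro s hs
    simp only [coe_filter, mem_univ, true_and, Set.mem_ofPred_eq] at hs ⊢
    exact (isoClass_induce_map e.toEmbedding s).trans hs
  · intro s hs
    simp only [coe_filter, mem_univ, true_and, Set.mem_ofPred_eq] at hs ⊢
    exact (isoClass_induce_map e.symm.toEmbedding s).trans hs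
  all_goals intro s _; simp [Finset.map_map]

theorem inducedCount_induce (G : SimpleGraph V) (t : Set V) [Fintype t] (Q : GraphClass) :
    inducedCount (G.induce t) Q = #{s : Finset V | ↑s ⊆ t ∧ isoClass (G.induce ↑s) = Q} := by
  have map_subtype : ∀ s : Finset V, ↑s ⊆ t → (s.subtype (· ∈ t)).map (.subtype _) = s :=
    fun s hs => subtype_map_of_mem fun x hx => hs hx
  refine card_nbij' (·.map (.subtype _)) (·.subtype (· ∈ t)) ?_ ?_ ?_ ?_
  · intro s hs
    simp only [coe_filter, mem_univ, true_and, Set.mem_ofPred_eq] at hs ⊢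
    exact ⟨map_subtype_subset s, (isoClass_induce_map (Embedding.induce t) s).trans hs⟩
  · intro s hs
    simp only [coe_filter, mem_univ, true_and, Set.mem_ofPred_eq] at hs ⊢
    obtain ⟨hst, hs⟩ := hs
    rw [← hs, ← isoClass_induce_map (Embedding.induce t)]
    exact congrArg (fun s : Finset V => isoClass (G.induce ↑s)) (map_subtype s hst)
  · intro s _
    exact Finset.map_injective _ (map_subtype _ (map_subtype_subset s))
  · intro s hs
    simp only [coe_filter, mem_univ, true_and, Set.mem_ofPred_eq] at hs
    exact map_subtype s hs.1

theorem card_eq_of_isoClass_induce_eq {G : SimpleGraph V} {Q : GraphClass} {s : Finset V}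
    (hs : isoClass (G.induce ↑s) = Q) : #s = Q.card := by
  simp [← hs]

/-- Kelly's lemma: every induced copy of `Q` lies in `choose (|V| - |Q|) (k - |Q|)` of the
`k`-subsets. -/
theorem sum_inducedCount_induce_powersetCard (G : SimpleGraph V) {Q : GraphClass} {k : ℕ}
    (hQ : Q.card ≤ k) :
    ∑ t ∈ powersetCard k (univ : Finset V), inducedCount (G.induce ↑t) Q =
      inducedCount G Q * (Fintype.card V - Q.card).choose (k - Q.card) := by
  set S : Finset (Finset V) := {s | isoClass (G.induce ↑s) = Q}
  calc ∑ t ∈ powersetCard k (univ : Finset V), inducedCount (G.induce ↑t) Q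
      = ∑ t ∈ powersetCard k univ, #(S.bipartiteBelow (· ⊆ ·) t) := by
        refine sum_congr rfl fun t _ => ?_
        rw [inducedCount_induce, bipartiteBelow, filter_filter]
        simp only [coe_subset, and_comm]
    _ = ∑ s ∈ S, #((powersetCard k univ).bipartiteAbove (· ⊆ ·) s) :=
        (sum_card_bipartiteAbove_eq_sum_card_bipartiteBelow _).symm
    _ = ∑ s ∈ S, (Fintype.card V - Q.card).choose (k - Q.card) := by
        refine sum_congr rfl fun s hs => ?_
        have hsQ := card_eq_of_isoClass_induce_eq (mem_filter.mp hs).2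
        rw [bipartiteAbove, card_filter_powersetCard_subset s univ k (subset_univ s)
          (hsQ ▸ hQ), card_univ, hsQ]
    _ = inducedCount G Q * (Fintype.card V - Q.card).choose (k - Q.card) := by
        rw [sum_const, smul_eq_mul]
        rfl

end InducedCount

theorem inducedCount_eq_of_sameDeck {n k : ℕ} {G H : SimpleGraph (Fin n)}
    (hdeck : SameDeck G H k) (hk : k ≤ n) {Q : GraphClass} (hQ : Q.card ≤ k) :
    inducedCount G Q = inducedCount H Q := by
  obtain ⟨φ, hφ⟩ := hdeck
  have hpos : 0 < (Fintype.card (Fin n) - Q.card).choose (k - Q.card) :=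
    Nat.choose_pos (by simp; omega)
  refine Nat.eq_of_mul_eq_mul_right hpos ?_
  have hmem : ∀ s : Finset (Fin n), s ∈ powersetCard k univ ↔ #s = k := by simp
  rw [← sum_inducedCount_induce_powersetCard G hQ, ← sum_inducedCount_induce_powersetCard H hQ,
    sum_subtype _ hmem, sum_subtype _ hmem]
  exact Fintype.sum_equiv φ _ _ fun t => inducedCount_congr (hφ t).some Q

noncomputable def GraphClass.inducedCount (R Q : GraphClass) : ℕ :=
  Quotient.lift (fun Y => Y.2.inducedCount Q)
    (fun X Y (h : Nonempty (X.2 ≃g Y.2)) => inducedCount_congr h.some Q) R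

section Components

variable {V W : Type*}

theorem GraphClass.inducedCount_isoClass [Fintype V] (G : SimpleGraph V) (Q : GraphClass) :
    (isoClass G).inducedCount Q = G.inducedCount Q :=
  inducedCount_congr (Iso.comap (Finite.equivFin V).symm G) Q

theorem isoClass_induce_univ [Fintype V] (G : SimpleGraph V) :
    isoClass (G.induce ↑(univ : Finset V)) = isoClass G := by
  rw [coe_univ]
  exact isoClass_eq_iff.mpr ⟨induceUnivIso G⟩

theorem inducedCount_eq_ite_of_card_eq [Fintype V] (G : SimpleGraph V) {Q : GraphClass}
    (hQ : Q.card = Fintype.card V) :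
    inducedCount G Q = if isoClass G = Q then 1 else 0 := by
  have : ({s | isoClass (G.induce ↑s) = Q} : Finset (Finset V)) =
      ({univ} : Finset (Finset V)).filter fun s : Finset V => isoClass (G.induce ↑s) = Q := by
    ext s
    simp only [mem_filter, mem_univ, true_and, mem_singleton, iff_and_self]
    intro hs
    exact eq_univ_of_card s ((card_eq_of_isoClass_induce_eq hs).trans hQ)
  rw [inducedCount, this, filter_singleton, isoClass_induce_univ]
  split_ifs <;> rfl

theorem inducedCount_eq_zero_of_card_lt [Fintype V] (G : SimpleGraph V) {Q : GraphClass}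
    (hQ : Fintype.card V < Q.card) : inducedCount G Q = 0 := by
  refine card_eq_zero.mpr (filter_eq_empty_iff.mpr fun s _ hs => ?_)
  have := card_eq_of_isoClass_induce_eq hs ▸ card_le_univ s
  omega

theorem GraphClass.inducedCount_eq_ite_add_ite (R Q : GraphClass) :
    R.inducedCount Q =
      (if R = Q then 1 else 0) + if Q.card < R.card then R.inducedCount Q else 0 := by
  obtain ⟨m, Y, rfl⟩ := R.exists_isoClass_eq
  rcases lt_trichotomy Q.card m with hlt | heq | hgt
  · have hne : isoClass Y ≠ Q := fun h => by simp [← h] at hlt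
    simp [hne, hlt]
  · rw [inducedCount_isoClass, Y.inducedCount_eq_ite_of_card_eq (by simpa using heq)]
    simp [heq]
  · have hne : isoClass Y ≠ Q := fun h => by simp [← h] at hgt
    rw [inducedCount_isoClass, Y.inducedCount_eq_zero_of_card_lt (by simpa using hgt)]
    simp [hne]

theorem subset_supp_of_connected_induce {G : SimpleGraph V} {s : Set V}
    (hs : (G.induce s).Connected) {v : V} (hv : v ∈ s) :
    s ⊆ (G.connectedComponentMk v).supp := fun u hu =>
  ConnectedComponent.sound <| hs.preconnected ⟨u, hu⟩ ⟨v, hv⟩ |>.map (Embedding.induce s).toHom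

noncomputable def componentClass [Finite V] (G : SimpleGraph V) (C : G.ConnectedComponent) :
    GraphClass :=
  isoClass (G.induce C.supp)

noncomputable def componentCount [Fintype V] (G : SimpleGraph V) (Q : GraphClass) : ℕ :=
  #{C : G.ConnectedComponent | G.componentClass C = Q}

variable [Fintype V]

theorem inducedCount_eq_sum_components (G : SimpleGraph V) {U : Type*} [Finite U]
    {X : SimpleGraph U} (hX : X.Connected) :
    G.inducedCount (isoClass X) = ∑ C : G.ConnectedComponent,
      (G.induce C.supp).inducedCount (isoClass X) := by
  have hconn : ∀ s : Finset V, isoClass (G.induce ↑s) = isoClass X → (G.induce ↑s).Connected :=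
    fun s hs => (isoClass_eq_iff.mp hs).some.connected_iff.mpr hX
  simp only [inducedCount_induce]
  rw [← card_biUnion]
  · refine congrArg card (Finset.ext fun s => ?_)
    simp only [mem_filter, mem_univ, true_and, mem_biUnion, exists_and_right, iff_and_self]
    intro hs
    obtain ⟨⟨v, hv⟩⟩ := (hconn s hs).nonempty
    exact ⟨G.connectedComponentMk v, subset_supp_of_connected_induce (hconn s hs) hv⟩
  · intro C _ D _ hCD
    refine Finset.disjoint_left.mpr fun s hC hD => hCD ?_
    simp only [mem_filter, mem_univ, true_and] at hC hD
    obtain ⟨⟨v, hv⟩⟩ := (hconn s hC.2).nonempty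
    exact (hC.1 hv).symm.trans (hD.1 hv)

theorem inducedCount_eq_componentCount_add (G : SimpleGraph V) {U : Type*} [Finite U]
    {X : SimpleGraph U} (hX : X.Connected) :
    G.inducedCount (isoClass X) = G.componentCount (isoClass X) + ∑ C : G.ConnectedComponent,
      if (isoClass X).card < (G.componentClass C).card then
        (G.componentClass C).inducedCount (isoClass X) else 0 := by
  rw [inducedCount_eq_sum_components G hX, componentCount, card_filter, ← sum_add_distrib]
  refine sum_congr rfl fun C _ => ?_
  rw [← GraphClass.inducedCount_eq_ite_add_ite]
  exact (GraphClass.inducedCount_isoClass _ _).symm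

theorem componentCount_eq_zero_of_not_connected (G : SimpleGraph V) {U : Type*} [Finite U]
    {X : SimpleGraph U} (hX : ¬X.Connected) : G.componentCount (isoClass X) = 0 :=
  card_eq_zero.mpr <| filter_eq_empty_iff.mpr fun C _ hC =>
    hX ((isoClass_eq_iff.mp hC).some.connected_iff.mp C.connected_toSimpleGraph)

theorem componentCount_eq_zero_of_lt_card {G : SimpleGraph V} {k : ℕ}
    (hG : ∀ C : G.ConnectedComponent, Nat.card C.supp ≤ k) {Q : GraphClass} (hQ : k < Q.card) :
    G.componentCount Q = 0 :=
  card_eq_zero.mpr <| filter_eq_empty_iff.mpr fun C _ hC => by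
    have := hG C
    rw [← hC, componentClass, card_isoClass] at hQ
    omega

variable [Fintype W] {G : SimpleGraph V} {H : SimpleGraph W}

theorem componentCount_eq_of_inducedCount_eq {Q : GraphClass}
    (hQ : G.inducedCount Q = H.inducedCount Q)
    (hlarger : ∀ R : GraphClass, Q.card < R.card → G.componentCount R = H.componentCount R) :
    G.componentCount Q = H.componentCount Q := by
  obtain ⟨m, X, rfl⟩ := Q.exists_isoClass_eq
  by_cases hX : X.Connected
  · have hsum := sum_comp_eq_of_card_fiber_eq (f := G.componentClass) (g := H.componentClass)
      (w := fun R => if (isoClass X).card < R.card then R.inducedCount (isoClass X) else 0)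
      fun R hR => hlarger R (by by_contra h; exact hR (if_neg h))
    rw [inducedCount_eq_componentCount_add G hX, inducedCount_eq_componentCount_add H hX,
      hsum] at hQ
    omega
  · rw [componentCount_eq_zero_of_not_connected G hX, componentCount_eq_zero_of_not_connected H hX]

theorem componentCount_eq_of_forall_inducedCount_eq {k : ℕ}
    (hG : ∀ C : G.ConnectedComponent, Nat.card C.supp ≤ k)
    (hH : ∀ D : H.ConnectedComponent, Nat.card D.supp ≤ k)
    (hcount : ∀ Q : GraphClass, Q.card ≤ k → G.inducedCount Q = H.inducedCount Q)
    (Q : GraphClass) : G.componentCount Q = H.componentCount Q := by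
  suffices ∀ d, ∀ Q : GraphClass, k < Q.card + d → G.componentCount Q = H.componentCount Q from
    this (k + 1) Q (by omega)
  intro d
  induction d with
  | zero =>
    intro Q hQ
    rw [componentCount_eq_zero_of_lt_card hG hQ, componentCount_eq_zero_of_lt_card hH hQ]
  | succ d ih =>
    intro Q hQ
    by_cases hQd : k < Q.card + d
    · exact ih Q hQd
    · exact componentCount_eq_of_inducedCount_eq (hcount Q (by omega)) fun R hR => ih R (by omega)

end Components

section Componentwise

variable {V W : Type*} {G : SimpleGraph V} {H : SimpleGraph W}
  (σ : G.ConnectedComponent ≃ H.ConnectedComponent)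
  (e : ∀ C, G.induce C.supp ≃g H.induce (σ C).supp)

def componentwiseMap (v : V) : W :=
  e (G.connectedComponentMk v) ⟨v, rfl⟩

variable {σ e}

theorem componentwiseMap_eq {C : G.ConnectedComponent} {v : V} (hv : v ∈ C.supp) :
    componentwiseMap σ e v = e C ⟨v, hv⟩ := by
  obtain rfl : G.connectedComponentMk v = C := hv
  rfl

theorem connectedComponentMk_componentwiseMap (v : V) :
    H.connectedComponentMk (componentwiseMap σ e v) = σ (G.connectedComponentMk v) :=
  (e _ ⟨v, rfl⟩).2

theorem connectedComponentMk_eq_of_componentwiseMap {u v : V}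
    (h : H.connectedComponentMk (componentwiseMap σ e u) =
      H.connectedComponentMk (componentwiseMap σ e v)) :
    G.connectedComponentMk u = G.connectedComponentMk v :=
  σ.injective (by rwa [connectedComponentMk_componentwiseMap,
    connectedComponentMk_componentwiseMap] at h)

theorem componentwiseMap_adj_iff (u v : V) :
    H.Adj (componentwiseMap σ e u) (componentwiseMap σ e v) ↔ G.Adj u v := by
  by_cases huv : G.connectedComponentMk v = G.connectedComponentMk u
  · rw [componentwiseMap_eq (show u ∈ (G.connectedComponentMk u).supp from rfl),
      componentwiseMap_eq (show v ∈ (G.connectedComponentMk u).supp from huv)]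
    exact (e _).map_adj_iff
  · refine ⟨fun h => absurd ?_ huv, fun h => absurd ?_ huv⟩
    · exact (connectedComponentMk_eq_of_componentwiseMap
        (ConnectedComponent.connectedComponentMk_eq_of_adj h)).symm
    · exact (ConnectedComponent.connectedComponentMk_eq_of_adj h).symm

theorem componentwiseMap_bijective : Function.Bijective (componentwiseMap σ e) := by
  refine ⟨fun u v huv => ?_, fun w => ?_⟩
  · have hv : v ∈ (G.connectedComponentMk u).supp :=
      (connectedComponentMk_eq_of_componentwiseMap (congrArg _ huv)).symm
    rw [componentwiseMap_eq (show u ∈ (G.connectedComponentMk u).supp from rfl),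
      componentwiseMap_eq hv] at huv
    exact congrArg Subtype.val ((e _).injective (Subtype.ext huv))
  · set C := σ.symm (H.connectedComponentMk w)
    have hw : w ∈ (σ C).supp := (σ.apply_symm_apply _).symm
    refine ⟨(e C).symm ⟨w, hw⟩, ?_⟩
    rw [componentwiseMap_eq ((e C).symm ⟨w, hw⟩).2, Subtype.coe_eta, RelIso.apply_symm_apply]

variable (σ e)

noncomputable def isoOfComponentwise : G ≃g H where
  toEquiv := Equiv.ofBijective _ componentwiseMap_bijective
  map_rel_iff' := componentwiseMap_adj_iff (σ := σ) (e := e) _ _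

end Componentwise

theorem nonempty_iso_of_componentCount_eq {V W : Type*} [Fintype V] [Fintype W]
    {G : SimpleGraph V} {H : SimpleGraph W} (h : ∀ Q, G.componentCount Q = H.componentCount Q) :
    Nonempty (G ≃g H) := by
  obtain ⟨σ, hσ⟩ := exists_equiv_of_card_fiber_eq h
  exact ⟨isoOfComponentwise σ fun C => (isoClass_eq_iff.mp (hσ C).symm).some⟩

section ConnectedSubsets

variable {V : Type*} {G : SimpleGraph V}

abbrev ConnectedSubsets (G : SimpleGraph V) (k : ℕ) : Type _ :=
  {t : {s : Finset V // #s = k} // (G.induce (t.1 : Set V)).Connected}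

theorem exists_mem_supp_notMem {C : G.ConnectedComponent} {s : Finset V}
    (hs : #s < Nat.card C.supp) : ∃ u ∈ C.supp, u ∉ s := by
  by_contra! h
  have := Set.ncard_le_ncard (t := (s : Set V)) h
  rw [Set.ncard_coe_finset, ← Nat.card_coe_set_eq] at this
  omega

theorem exists_connected_induce_card_eq {C : G.ConnectedComponent} {v : V} (hv : v ∈ C.supp)
    {j : ℕ} (hj : 1 ≤ j) (hjC : j ≤ Nat.card C.supp) :
    ∃ s : Finset V, v ∈ s ∧ ↑s ⊆ C.supp ∧ #s = j ∧ (G.induce ↑s).Connected := by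
  induction j, hj using Nat.le_induction with
  | base =>
    refine ⟨{v}, mem_singleton_self v, by simpa using hv, card_singleton v, ?_⟩
    rw [coe_singleton, induce_singleton_eq_top]
    exact connected_top
  | succ j hj ih =>
    obtain ⟨s, hvs, hsC, rfl, hconn⟩ := ih (by omega)
    obtain ⟨u, huC, hus⟩ := exists_mem_supp_notMem (C := C) (s := s) (by omega)
    obtain ⟨d, -, hx, hy⟩ :=
      (C.reachable_of_mem_supp hv huC).some.exists_boundary_dart (s : Set V) hvs hus
    refine ⟨insert d.snd s, mem_insert_of_mem hvs, ?_, card_insert_of_notMem hy, ?_⟩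
    · rw [coe_insert, Set.insert_subset_iff]
      exact ⟨(C.mem_supp_congr_adj d.adj).mp (hsC hx), hsC⟩
    · have hy_conn : (G.induce {d.snd}).Preconnected := by
        rw [induce_singleton_eq_top]
        exact connected_top.preconnected
      have := connected_induce_union hconn.preconnected hy_conn hx rfl d.adj
      rwa [Set.union_singleton, ← coe_insert] at this

theorem exists_coe_eq_supp_of_connected_induce [Finite V] {k : ℕ}
    (hG : ∀ C : G.ConnectedComponent, Nat.card C.supp ≤ k) {s : Finset V} (hs : #s = k)
    (hconn : (G.induce ↑s).Connected) : ∃ C : G.ConnectedComponent, ↑s = C.supp := by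
  obtain ⟨⟨v, hv⟩⟩ := hconn.nonempty
  refine ⟨G.connectedComponentMk v, Set.eq_of_subset_of_ncard_le
    (subset_supp_of_connected_induce hconn hv) ?_⟩
  rw [Set.ncard_coe_finset, hs, ← Nat.card_coe_set_eq]
  exact hG _

theorem subsingleton_connectedSubsets [Fintype V] {k : ℕ}
    (hG : ∀ C : G.ConnectedComponent, Nat.card C.supp ≤ k) (hk : Fintype.card V < 2 * k) :
    Subsingleton (G.ConnectedSubsets k) := by
  refine ⟨fun ⟨⟨s, hs⟩, hsc⟩ ⟨⟨t, ht⟩, htc⟩ => ?_⟩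
  obtain ⟨C, hC⟩ := exists_coe_eq_supp_of_connected_induce hG hs hsc
  obtain ⟨D, hD⟩ := exists_coe_eq_supp_of_connected_induce hG ht htc
  by_cases hCD : C = D
  · obtain rfl : s = t := coe_injective (hC.trans (hCD ▸ hD.symm))
    rfl
  · have hdisj : Disjoint C.supp D.supp := G.pairwise_disjoint_supp_connectedComponent hCD
    rw [← hC, ← hD, disjoint_coe] at hdisj
    have := card_le_univ (s ∪ t)
    rw [card_union_of_disjoint hdisj] at this
    omega

theorem not_subsingleton_connectedSubsets {k : ℕ} (hk : 1 ≤ k) {C : G.ConnectedComponent}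
    (hC : k < Nat.card C.supp) : ¬Subsingleton (G.ConnectedSubsets k) := by
  obtain ⟨s, -, -, hs, hsc⟩ := exists_connected_induce_card_eq (C := C) C.out_eq hk hC.le
  obtain ⟨u, huC, hus⟩ := exists_mem_supp_notMem (C := C) (s := s) (by omega)
  obtain ⟨t, hut, -, ht, htc⟩ := exists_connected_induce_card_eq huC hk hC.le
  intro h
  have hst : s = t :=
    congrArg (fun x : G.ConnectedSubsets k => x.1.1) (h.elim ⟨⟨s, hs⟩, hsc⟩ ⟨⟨t, ht⟩, htc⟩)
  exact hus (hst ▸ hut)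

end ConnectedSubsets

theorem card_supp_le_of_sameDeck {n k : ℕ} {G H : SimpleGraph (Fin n)} (hdeck : SameDeck G H k)
    (hk : n < 2 * k) (hG : ∀ C : G.ConnectedComponent, Nat.card C.supp ≤ k)
    (D : H.ConnectedComponent) : Nat.card D.supp ≤ k := by
  obtain ⟨φ, hφ⟩ := hdeck
  by_contra! hD
  have e : G.ConnectedSubsets k ≃ H.ConnectedSubsets k :=
    φ.subtypeEquiv fun t => (hφ t).some.connected_iff
  have := subsingleton_connectedSubsets hG (by simpa using hk)
  exact not_subsingleton_connectedSubsets (by omega) hD e.symm.subsingleton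

end SimpleGraph

theorem reconstructible_of_small_components_general (n ℓ : ℕ) (hn : 2 * ℓ < n)
    (G : SimpleGraph (Fin n))
    (hcomp : ∀ c : G.ConnectedComponent, Nat.card c.supp ≤ n - ℓ)
    (H : SimpleGraph (Fin n)) (hdeck : SameDeck G H (n - ℓ)) :
    Nonempty (G ≃g H) := by
  have hH := card_supp_le_of_sameDeck hdeck (by omega) hcomp
  exact nonempty_iso_of_componentCount_eq <| componentCount_eq_of_forall_inducedCount_eq hcomp hH
    fun Q hQ => inducedCount_eq_of_sameDeck hdeck (by omega) hQ

/-- If `n > 2ℓ` and every component of the `n`-vertex graph `G` has at most `n-ℓ`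
vertices, then any `n`-vertex graph with the same `(n-ℓ)`-deck as `G` is isomorphic
to `G`. -/
theorem reconstructible_of_small_components (n ℓ : ℕ) (hℓ : 1 ≤ ℓ) (hn : 2 * ℓ < n)
    (G : SimpleGraph (Fin n))
    (hcomp : ∀ c : G.ConnectedComponent, Nat.card c.supp ≤ n - ℓ)
    (H : SimpleGraph (Fin n)) (hdeck : SameDeck G H (n - ℓ)) :
    Nonempty (G ≃g H) :=
  reconstructible_of_small_components_general n ℓ hn G hcomp H hdeck
end

section
/- Let n and ℓ be positive integers with ℓ < n. If G is an n-vertex simple graph in which every connected component has fewer than n−ℓ vertices, then every n-vertex simple graph having the same (n−ℓ)-deck as G is isomorphic to G (no restriction on n beyond n > ℓ is needed). -/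
/-!
Kelly's lemma: double counting pairs (induced embedding of `C` into `G`, `k`-set containing its
image) shows that for every graph `C` on `d ≤ k` vertices the number of induced embeddings
`C ↪g G` is determined by the `k`-deck. For connected `C` these embeddings split over the
components of `G`. No component of `H` has `k` or more vertices either, since a connected
`k`-vertex induced subgraph of `H` would embed into `G`. The components are then matched by
decreasing size: once those with more than `d` vertices are matched isomorphically, counting
embeddings of each connected `d`-vertex graph `C` shows that `G` and `H` have equally many
components isomorphic to `C`.
-/

open SimpleGraph

open Finset

instance RelEmbedding.instFinite {α β : Type*} [Finite β] {r : α → α → Prop}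
    {s : β → β → Prop} : Finite (r ↪r s) :=
  Finite.of_injective _ RelEmbedding.toEmbedding_injective

namespace SimpleGraph

variable {V W : Type*}

theorem card_embedding_congr {U : Type*} {C : SimpleGraph W} {X : SimpleGraph U}
    {Y : SimpleGraph V} (e : X ≃g Y) : Nat.card (C ↪g X) = Nat.card (C ↪g Y) :=
  Nat.card_congr (RelIso.relEmbeddingCongr (RelIso.refl _) e)

def embeddingInduceEquiv (C : SimpleGraph W) (G : SimpleGraph V) (s : Set V) :
    (C ↪g G.induce s) ≃ {f : C ↪g G // ∀ x, f x ∈ s} where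
  toFun f := ⟨(Embedding.induce s).comp f, fun x => (f x).2⟩
  invFun f := RelEmbedding.codRestrict s f.1 f.2
  left_inv _ := rfl
  right_inv _ := rfl

theorem sum_card_embedding_induce [Fintype V] [Fintype W] (C : SimpleGraph W)
    (G : SimpleGraph V) {k : ℕ} (hk : Fintype.card W ≤ k) :
    ∑ B : {s : Finset V // #s = k}, Nat.card (C ↪g G.induce (B.1 : Set V)) =
      Nat.card (C ↪g G) * (Fintype.card V - Fintype.card W).choose (k - Fintype.card W) := by
  classical
  have hrange (f : C ↪g G) : #(univ.map f.toEmbedding) = Fintype.card W := by simp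
  calc ∑ B : {s : Finset V // #s = k}, Nat.card (C ↪g G.induce (B.1 : Set V))
      = ∑ B ∈ univ.powersetCard k, #{f : C ↪g G | univ.map f.toEmbedding ⊆ B} := by
        rw [sum_subtype _ fun _ => mem_powersetCard_univ]
        refine sum_congr rfl fun B _ => ?_
        rw [Nat.card_congr (embeddingInduceEquiv C G B), Nat.card_eq_fintype_card,
          Fintype.card_subtype]
        simp [subset_iff]
    _ = ∑ f : C ↪g G, #{B ∈ univ.powersetCard k | univ.map f.toEmbedding ⊆ B} :=
        sum_card_bipartiteAbove_eq_sum_card_bipartiteBelow _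
    _ = _ := by
        simp only [card_filter_powersetCard_subset _ _ _ (subset_univ _)
          ((hrange _).trans_le hk), hrange, card_univ, sum_const, smul_eq_mul,
          Nat.card_eq_fintype_card]

theorem card_embedding_eq_of_deck [Fintype V] [Fintype W] {G H : SimpleGraph V} {k : ℕ}
    (hk : k ≤ Fintype.card V) (φ : {s : Finset V // #s = k} ≃ {s : Finset V // #s = k})
    (hφ : ∀ s, Nonempty (G.induce (s.1 : Set V) ≃g H.induce ((φ s).1 : Set V)))
    (C : SimpleGraph W) (hC : Fintype.card W ≤ k) :
    Nat.card (C ↪g G) = Nat.card (C ↪g H) := by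
  have hdecks : ∑ B : {s : Finset V // #s = k}, Nat.card (C ↪g G.induce (B.1 : Set V)) =
      ∑ B : {s : Finset V // #s = k}, Nat.card (C ↪g H.induce (B.1 : Set V)) :=
    Fintype.sum_equiv φ _ _ fun B => card_embedding_congr (hφ B).some
  rw [sum_card_embedding_induce C G hC, sum_card_embedding_induce C H hC] at hdecks
  exact Nat.eq_of_mul_eq_mul_right (Nat.choose_pos (by omega)) hdecks

noncomputable def embeddingEquivSigmaComponent {C : SimpleGraph W} (hC : C.Connected)
    (G : SimpleGraph V) : (C ↪g G) ≃ Σ K : G.ConnectedComponent, (C ↪g G.induce K.supp) :=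
  (Equiv.sigmaFiberEquiv fun f : C ↪g G => G.connectedComponentMk (f hC.nonempty.some)).symm.trans
    (Equiv.sigmaCongrRight fun K => (Equiv.subtypeEquivRight fun f => ⟨fun hf x =>
      (ConnectedComponent.sound ((hC.preconnected x _).map f.toHom)).trans hf,
      fun hf => hf _⟩).trans (embeddingInduceEquiv C G K.supp).symm)

theorem Embedding.nonempty_iso_of_card_le {U : Type*} [Finite U] {C : SimpleGraph W}
    {X : SimpleGraph U} (f : C ↪g X) (h : Nat.card U ≤ Nat.card W) : Nonempty (C ≃g X) :=
  ⟨⟨Equiv.ofBijective f (f.injective.bijective_of_nat_card_le h), f.map_rel_iff⟩⟩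

theorem card_embedding_eq_of_connected [Fintype W] [Finite V] {C : SimpleGraph W}
    (hC : C.Connected) (G : SimpleGraph V) :
    Nat.card (C ↪g G) =
      Nat.card {K : G.ConnectedComponent // Nonempty (C ≃g G.induce K.supp)} *
          Nat.card (C ↪g C) +
        Nat.card (Σ K : {K : G.ConnectedComponent // Fintype.card W < Nat.card K.supp},
          C ↪g G.induce K.1.supp) := by
  classical
  have := Fintype.ofFinite G.ConnectedComponent
  set P := fun K : G.ConnectedComponent => Nonempty (C ≃g G.induce K.supp)
  set Q := fun K : G.ConnectedComponent => Fintype.card W < Nat.card K.supp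
  set f := fun K : G.ConnectedComponent => Nat.card (C ↪g G.induce K.supp)
  have hP (K) (hK : P K) : f K = Nat.card (C ↪g C) := card_embedding_congr hK.some.symm
  have hPQ (K) (hK : P K) : ¬ Q K := by
    simp only [Q, ← Nat.card_congr hK.some.toEquiv, Nat.card_eq_fintype_card, lt_irrefl,
      not_false_eq_true]
  have hzero (K) (hP : ¬ P K) (hQ : ¬ Q K) : f K = 0 := by
    refine Nat.card_eq_zero.2 (Or.inl ⟨fun e => hP (e.nonempty_iso_of_card_le ?_)⟩)
    simpa [Q] using hQ
  have hrest : ∑ K with Q K, f K = ∑ K with ¬ P K, f K :=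
    sum_subset (by grind) (by grind)
  rw [Nat.card_congr (embeddingEquivSigmaComponent hC G), Nat.card_sigma, Nat.card_sigma,
    Nat.card_eq_fintype_card, Fintype.card_subtype,
    ← sum_subtype (univ.filter Q) (fun _ => mem_filter_univ _) f, hrest,
    ← sum_filter_add_sum_filter_not univ P, ← smul_eq_mul, ← sum_const]
  exact congrArg (· + _) (sum_congr rfl fun K hK => hP K (mem_filter.1 hK).2)

theorem ConnectedComponent.exists_connected_induce_card {G : SimpleGraph V}
    (K : G.ConnectedComponent) {j : ℕ} (hj : 1 ≤ j) (hjK : j ≤ Nat.card K.supp) :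
    ∃ A : Finset V, (A : Set V) ⊆ K.supp ∧ #A = j ∧ (G.induce (A : Set V)).Connected := by
  classical
  induction j, hj using Nat.le_induction with
  | base =>
    obtain ⟨v, hv⟩ := K.nonempty_supp
    refine ⟨{v}, by simpa using hv, card_singleton v, ?_⟩
    rw [coe_singleton, connected_iff]
    exact ⟨.of_subsingleton, inferInstance⟩
  | succ j hj ih =>
    obtain ⟨A, hAK, hA, hconn⟩ := ih (by omega)
    obtain ⟨w, hwK, hwA⟩ : ∃ w ∈ K.supp, w ∉ (A : Set V) := by
      by_contra! h
      have := Nat.card_mono A.finite_toSet h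
      rw [Nat.card_coe_set_eq (A : Set V), Set.ncard_coe_finset] at this
      omega
    obtain ⟨u, hu⟩ := card_pos.1 (show 0 < #A by omega)
    obtain ⟨dart, -, hdA, hdA'⟩ :=
      (K.reachable_of_mem_supp (hAK hu) hwK).some.exists_boundary_dart _ hu hwA
    refine ⟨insert dart.snd A, ?_, by rw [card_insert_of_notMem hdA', hA], ?_⟩
    · rw [coe_insert]
      exact Set.insert_subset (K.mem_supp_of_adj_mem_supp (hAK hdA) dart.adj) hAK
    · rw [coe_insert, ← Set.union_singleton]
      exact connected_induce_union hconn.preconnected .of_subsingleton hdA rfl dart.adj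

theorem card_supp_lt_of_deck [Fintype V] {G H : SimpleGraph V} {k : ℕ}
    (hk : k ≤ Fintype.card V) (φ : {s : Finset V // #s = k} ≃ {s : Finset V // #s = k})
    (hφ : ∀ s, Nonempty (G.induce (s.1 : Set V) ≃g H.induce ((φ s).1 : Set V)))
    (hG : ∀ K : G.ConnectedComponent, Nat.card K.supp < k) (K : H.ConnectedComponent) :
    Nat.card K.supp < k := by
  by_contra! hK
  have hk1 : 1 ≤ k := by
    obtain ⟨v, -⟩ := K.nonempty_supp
    have := hG (G.connectedComponentMk v)
    omega
  obtain ⟨A, -, hA, hconn⟩ := K.exists_connected_induce_card hk1 hK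
  have hAk : Nat.card (A : Set V) = k := by simp [hA]
  have hGempty : IsEmpty (H.induce (A : Set V) ↪g G) := ⟨fun f => by
    obtain ⟨K', f'⟩ := embeddingEquivSigmaComponent hconn G f
    have := Nat.card_le_card_of_injective f' f'.injective
    have := hG K'
    omega⟩
  have : Nonempty (H.induce (A : Set V) ↪g H) := ⟨Embedding.induce _⟩
  have hcount := card_embedding_eq_of_deck hk φ hφ (H.induce (A : Set V)) (by simp [hA])
  rw [Nat.card_of_isEmpty] at hcount
  exact Nat.card_pos.ne hcount

variable (W) in
def isoSetoid : Setoid (SimpleGraph W) where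
  r C D := Nonempty (C ≃g D)
  iseqv := ⟨fun _ => ⟨Iso.refl⟩, fun ⟨e⟩ => ⟨e.symm⟩, fun ⟨e⟩ ⟨f⟩ => ⟨e.trans f⟩⟩

def ComponentsMatch (G H : SimpleGraph V) (p : ℕ → Prop) : Prop :=
  ∃ θ : {K : G.ConnectedComponent // p (Nat.card K.supp)} ≃
      {K : H.ConnectedComponent // p (Nat.card K.supp)},
    ∀ K, Nonempty (G.induce K.1.supp ≃g H.induce (θ K).1.supp)

namespace ComponentsMatch

variable {G H : SimpleGraph V} {p q : ℕ → Prop}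

theorem of_forall_not (hG : ∀ K : G.ConnectedComponent, ¬ p (Nat.card K.supp))
    (hH : ∀ K : H.ConnectedComponent, ¬ p (Nat.card K.supp)) : ComponentsMatch G H p :=
  have : IsEmpty {K : G.ConnectedComponent // p (Nat.card K.supp)} := ⟨fun K => hG K.1 K.2⟩
  have : IsEmpty {K : H.ConnectedComponent // p (Nat.card K.supp)} := ⟨fun K => hH K.1 K.2⟩
  ⟨Equiv.equivOfIsEmpty _ _, isEmptyElim⟩

theorem or (hpq : ∀ n, p n → ¬ q n) (hp : ComponentsMatch G H p) (hq : ComponentsMatch G H q) :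
    ComponentsMatch G H fun n => p n ∨ q n := by
  classical
  obtain ⟨θp, hθp⟩ := hp
  obtain ⟨θq, hθq⟩ := hq
  let split (G' : SimpleGraph V) := subtypeOrEquiv (fun K : G'.ConnectedComponent =>
    p (Nat.card K.supp)) (fun K => q (Nat.card K.supp))
    fun r hrp hrq K hK => (hpq _ (hrp K hK) (hrq K hK)).elim
  refine ⟨(split G).trans ((θp.sumCongr θq).trans (split H).symm), fun K => ?_⟩
  rcases h : split G K with K' | K' <;> obtain rfl := (split G).eq_symm_apply.2 h <;>
    rw [Equiv.trans_apply, Equiv.trans_apply, Equiv.apply_symm_apply]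
  exacts [hθp K', hθq K']

theorem of_card_eq [Finite V] {d : ℕ} (h : ∀ C : SimpleGraph (Fin d), C.Connected →
      Nat.card {K : G.ConnectedComponent // Nonempty (C ≃g G.induce K.supp)} =
        Nat.card {K : H.ConnectedComponent // Nonempty (C ≃g H.induce K.supp)}) :
    ComponentsMatch G H (· = d) := by
  let cls (G' : SimpleGraph V) (K : {K : G'.ConnectedComponent // Nat.card K.supp = d}) :
      Quotient (isoSetoid (Fin d)) :=
    ⟦(G'.induce K.1.supp).comap (Finite.equivFinOfCardEq K.2).symm.toEmbedding⟧
  have cls_eq (G' : SimpleGraph V) K (C : SimpleGraph (Fin d)) :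
      cls G' K = ⟦C⟧ ↔ Nonempty (C ≃g G'.induce K.1.supp) :=
    Quotient.eq.trans ⟨fun ⟨e⟩ => ⟨e.symm.trans (Iso.comap _ _)⟩,
      fun ⟨e⟩ => ⟨(Iso.comap _ _).trans e.symm⟩⟩
  let fiber (G' : SimpleGraph V) (C : SimpleGraph (Fin d)) :
      {K // cls G' K = ⟦C⟧} ≃ {K : G'.ConnectedComponent // Nonempty (C ≃g G'.induce K.supp)} :=
    { toFun K := ⟨K.1.1, (cls_eq G' K.1 C).1 K.2⟩
      invFun K := ⟨⟨K.1, by rw [← Nat.card_congr K.2.some.toEquiv, Nat.card_fin]⟩,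
        (cls_eq G' _ C).2 K.2⟩
      left_inv _ := rfl
      right_inv _ := rfl }
  have fiber_equiv (q) : Nonempty ({K // cls G K = q} ≃ {K // cls H K = q}) := by
    induction q using Quotient.ind with | _ C
    by_cases hC : C.Connected
    · exact ⟨(fiber G C).trans ((Finite.card_eq.1 (h C hC)).some.trans (fiber H C).symm)⟩
    · have (G' : SimpleGraph V) :
          IsEmpty {K : G'.ConnectedComponent // Nonempty (C ≃g G'.induce K.supp)} :=
        ⟨fun K => hC (K.2.some.connected_iff.2 K.1.connected_toSimpleGraph)⟩
      exact ⟨(fiber G C).trans ((Equiv.equivOfIsEmpty _ _).trans (fiber H C).symm)⟩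
  refine ⟨Equiv.ofFiberEquiv fun q => (fiber_equiv q).some, fun K => ?_⟩
  obtain ⟨eG⟩ := (cls_eq G K _).1 rfl
  obtain ⟨eH⟩ := (cls_eq H _ _).1 (Equiv.ofFiberEquiv_map (fun q => (fiber_equiv q).some) K)
  exact ⟨eG.symm.trans eH⟩

theorem le_of_lt [Finite V] {d : ℕ}
    (hcount : ∀ C : SimpleGraph (Fin d), Nat.card (C ↪g G) = Nat.card (C ↪g H))
    (h : ComponentsMatch G H (d < ·)) : ComponentsMatch G H (d ≤ ·) := by
  have heq : ComponentsMatch G H (· = d) := of_card_eq fun C hC => by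
    obtain ⟨θ, hθ⟩ := h
    have hlarge : Nat.card (Σ K : {K : G.ConnectedComponent // d < Nat.card K.supp},
        C ↪g G.induce K.1.supp) = Nat.card (Σ K : {K : H.ConnectedComponent //
        d < Nat.card K.supp}, C ↪g H.induce K.1.supp) :=
      Nat.card_congr (.sigmaCongr θ fun K => RelIso.relEmbeddingCongr (.refl _) (hθ K).some)
    have : Nonempty (C ↪g C) := ⟨RelEmbedding.refl _⟩
    have hpos : 0 < Nat.card (C ↪g C) := Nat.card_pos
    have := hcount C
    rw [card_embedding_eq_of_connected hC G, card_embedding_eq_of_connected hC H,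
      Fintype.card_fin, hlarge] at this
    exact Nat.eq_of_mul_eq_mul_right hpos (by omega)
  have hpred : (fun n => n = d ∨ d < n) = (d ≤ ·) := by
    ext n
    omega
  exact hpred ▸ heq.or (fun n h1 h2 => by omega) h

end ComponentsMatch

theorem nonempty_iso_of_components [Finite V] {G H : SimpleGraph V}
    (θ : G.ConnectedComponent ≃ H.ConnectedComponent)
    (hθ : ∀ K, Nonempty (G.induce K.supp ≃g H.induce (θ K).supp)) : Nonempty (G ≃g H) := by
  let e K := (hθ K).some
  let f (v : V) : V := e (G.connectedComponentMk v) ⟨v, rfl⟩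
  have f_eq {K : G.ConnectedComponent} {v : V} (hv : v ∈ K.supp) : f v = e K ⟨v, hv⟩ := by
    obtain rfl : G.connectedComponentMk v = K := hv
    rfl
  have comp_f (v : V) : H.connectedComponentMk (f v) = θ (G.connectedComponentMk v) :=
    (e _ ⟨v, rfl⟩).2
  have comp_eq {u v : V} (h : H.connectedComponentMk (f u) = H.connectedComponentMk (f v)) :
      G.connectedComponentMk u = G.connectedComponentMk v :=
    θ.injective (by rw [← comp_f, ← comp_f, h])
  have hinj : Function.Injective f := fun u v h => by
    rw [f_eq rfl, f_eq (comp_eq (congrArg _ h)).symm] at h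
    exact congrArg Subtype.val ((e _).injective (Subtype.ext h))
  have hadj (u v : V) : H.Adj (f u) (f v) ↔ G.Adj u v := by
    by_cases huv : G.connectedComponentMk u = G.connectedComponentMk v
    · rw [f_eq rfl, f_eq huv.symm]
      exact (e _).map_rel_iff
    · exact iff_of_false (fun h => huv (comp_eq (ConnectedComponent.sound h.reachable)))
        fun h => huv (ConnectedComponent.sound h.reachable)
  exact ⟨⟨.ofBijective f hinj.bijective_of_finite, hadj _ _⟩⟩

theorem nonempty_iso_of_deck_of_card_supp_lt [Fintype V] {G H : SimpleGraph V} {k : ℕ}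
    (hk : k ≤ Fintype.card V) (φ : {s : Finset V // #s = k} ≃ {s : Finset V // #s = k})
    (hφ : ∀ s, Nonempty (G.induce (s.1 : Set V) ≃g H.induce ((φ s).1 : Set V)))
    (hG : ∀ K : G.ConnectedComponent, Nat.card K.supp < k) : Nonempty (G ≃g H) := by
  have hH := card_supp_lt_of_deck hk φ hφ hG
  have hmatch : ComponentsMatch G H (0 ≤ ·) := by
    exact Nat.decreasingInduction (motive := fun d _ => ComponentsMatch G H (d ≤ ·))
      (fun d hd ih => ih.le_of_lt fun C => card_embedding_eq_of_deck hk φ hφ C (by simp; omega))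
      (.of_forall_not (fun K => by have := hG K; omega) fun K => by have := hH K; omega)
      (Nat.zero_le k)
  obtain ⟨θ, hθ⟩ := hmatch
  exact nonempty_iso_of_components ((Equiv.subtypeUnivEquiv fun K => Nat.zero_le _).symm.trans
    (θ.trans (Equiv.subtypeUnivEquiv fun K => Nat.zero_le _))) fun K => hθ ⟨K, Nat.zero_le _⟩

end SimpleGraph

theorem reconstructible_of_smaller_components_general (n ℓ : ℕ)
    (G : SimpleGraph (Fin n))
    (hcomp : ∀ c : G.ConnectedComponent, Nat.card c.supp < n - ℓ)
    (H : SimpleGraph (Fin n)) (hdeck : SameDeck G H (n - ℓ)) :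
    Nonempty (G ≃g H) := by
  obtain ⟨φ, hφ⟩ := hdeck
  exact nonempty_iso_of_deck_of_card_supp_lt (by simp) φ hφ hcomp

/-- If `ℓ < n` and every component of the `n`-vertex graph `G` has fewer than `n-ℓ`
vertices, then any `n`-vertex graph with the same `(n-ℓ)`-deck as `G` is isomorphic
to `G` (no further restriction on `n` is needed). -/
theorem reconstructible_of_smaller_components (n ℓ : ℕ) (hℓ : 1 ≤ ℓ) (hn : ℓ < n)
    (G : SimpleGraph (Fin n))
    (hcomp : ∀ c : G.ConnectedComponent, Nat.card c.supp < n - ℓ)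
    (H : SimpleGraph (Fin n)) (hdeck : SameDeck G H (n - ℓ)) :
    Nonempty (G ≃g H) :=
  reconstructible_of_smaller_components_general n ℓ G hcomp H hdeck
end

section
/- Let n and ℓ be positive integers with ℓ < n. Let G and H be n-vertex triangle-free simple graphs having the same (n−ℓ)-deck, and suppose that for every integer i with i ≥ n−ℓ, G and H have the same number of vertices of degree i. Then G and H have the same degree list (the multiset of vertex degrees of G equals that of H). -/
open SimpleGraph

/-- The degree of a vertex. -/
noncomputable def ndeg {V : Type*} (G : SimpleGraph V) (v : V) : ℕ :=
  Nat.card {w : V // G.Adj v w}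

/-! For `d < k`, `∑ᵥ C(deg v, d)` counts the pairs (vertex, `d`-set of its neighbours), a
configuration on `d + 1` vertices; every such pair lies in `C(n - d - 1, k - d - 1)` of the
`k`-subsets, so summing the same statistic over the cards of the `k`-deck recovers it.
Given these sums for all `d < k` and the number of vertices of each degree `i ≥ k`, the numbers
of vertices of degree `k - 1, k - 2, …, 0` follow one at a time, because the system
`∑ᵢ #{v | deg v = i} C(i, d)` is unitriangular in `(i, d)`. -/

open Finset

namespace Multiset

theorem sum_map_choose_eq_count_add (u : Multiset ℕ) (i : ℕ) :
    (u.map (·.choose i)).sum = count i u + ((u.filter (i < ·)).map (·.choose i)).sum := by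
  induction u using Multiset.induction_on with
  | empty => simp
  | cons a u ih =>
    rcases lt_trichotomy a i with h | rfl | h
    · simp [ih, Nat.choose_eq_zero_of_lt h, h.ne', h.not_gt]
    · simp [ih]; omega
    · simp [ih, h, h.ne]; omega

theorem count_eq_of_sum_map_choose_eq {s t : Multiset ℕ} {i : ℕ}
    (hgt : ∀ j, i < j → count j s = count j t)
    (hsum : (s.map (·.choose i)).sum = (t.map (·.choose i)).sum) : count i s = count i t := by
  have hfilter : s.filter (i < ·) = t.filter (i < ·) := by
    ext j
    simp only [count_filter]
    split_ifs with hj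
    exacts [hgt j hj, rfl]
  rw [sum_map_choose_eq_count_add s, sum_map_choose_eq_count_add t, hfilter] at hsum
  omega

theorem eq_of_sum_map_choose_eq_of_count_eq {s t : Multiset ℕ} {k : ℕ}
    (hsum : ∀ d < k, (s.map (·.choose d)).sum = (t.map (·.choose d)).sum)
    (hcount : ∀ i, k ≤ i → count i s = count i t) : s = t := by
  suffices ∀ m i, k ≤ i + m → count i s = count i t from ext.2 fun i => this k i (by omega)
  intro m
  induction m with
  | zero => exact hcount
  | succ m ih =>
    intro i hi
    rcases le_or_gt k (i + m) with h | h
    · exact ih i h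
    · exact count_eq_of_sum_map_choose_eq (fun j hj => ih j (by omega)) (hsum i (by omega))

end Multiset

section

variable {V W : Type*}

theorem ndeg_eq_degree (G : SimpleGraph V) (v : V) [Fintype (G.neighborSet v)] :
    ndeg G v = G.degree v :=
  (Nat.card_eq_fintype_card (α := G.neighborSet v)).trans (G.card_neighborSet_eq_degree v)

theorem ndeg_congr {G : SimpleGraph V} {G' : SimpleGraph W} (e : G ≃g G') (v : V) :
    ndeg G v = ndeg G' (e v) :=
  Nat.card_congr (e.toEquiv.subtypeEquiv fun _ => e.map_adj_iff.symm)

variable [Fintype V]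

noncomputable def starCount (d : ℕ) (G : SimpleGraph V) : ℕ :=
  ∑ v, (ndeg G v).choose d

theorem starCount_congr [Fintype W] {G : SimpleGraph V} {G' : SimpleGraph W} (e : G ≃g G')
    (d : ℕ) : starCount d G = starCount d G' :=
  Fintype.sum_equiv e.toEquiv _ _ fun v => by rw [ndeg_congr e]; rfl

theorem sum_map_choose_map_ndeg (G : SimpleGraph V) (d : ℕ) :
    ((univ.val.map (ndeg G)).map (·.choose d)).sum = starCount d G := by
  rw [Multiset.map_map]
  rfl

theorem count_map_ndeg (G : SimpleGraph V) (i : ℕ) :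
    (univ.val.map (ndeg G)).count i = Nat.card {v : V // ndeg G v = i} := by
  classical
  rw [Multiset.count_map, Nat.card_eq_fintype_card, Fintype.card_subtype, card_def, filter_val]
  simp only [eq_comm]

variable [DecidableEq V] (G : SimpleGraph V) [DecidableRel G.Adj]

theorem ndeg_induce_coe (s : Finset V) (v : (s : Set V)) :
    ndeg (G.induce (s : Set V)) v = #(G.neighborFinset v ∩ s) := by
  rw [ndeg_eq_degree, ← card_neighborFinset_eq_degree,
    ← card_map (.subtype (· ∈ (s : Set V)))]
  congr 1
  ext w
  simp [and_comm]

theorem starCount_induce_coe (d : ℕ) (s : Finset V) :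
    starCount d (G.induce (s : Set V))
      = ∑ v, #{L ∈ (G.neighborFinset v).powersetCard d | insert v L ⊆ s} := by
  have hstars (v : V) : #{L ∈ (G.neighborFinset v).powersetCard d | insert v L ⊆ s}
      = if v ∈ s then (#(G.neighborFinset v ∩ s)).choose d else 0 := by
    split_ifs with hv
    · rw [← card_powersetCard]
      congr 1
      ext L
      simp only [mem_filter, mem_powersetCard, insert_subset_iff, hv, subset_inter_iff, true_and]
      tauto
    · simp [insert_subset_iff, hv]
  calc starCount d (G.induce (s : Set V))
      = ∑ v : (s : Set V), (#(G.neighborFinset v ∩ s)).choose d := by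
        simp only [starCount, ndeg_induce_coe]
    _ = ∑ v ∈ s, (#(G.neighborFinset v ∩ s)).choose d := by
        rw [sum_subtype s (p := (· ∈ (s : Set V))) (fun _ => Iff.rfl)]
    _ = _ := by simp only [hstars, sum_ite_mem, univ_inter]

theorem sum_starCount_induce {d k : ℕ} (hdk : d < k) :
    ∑ s ∈ (univ : Finset V).powersetCard k, starCount d (G.induce (s : Set V))
      = starCount d G * (Fintype.card V - (d + 1)).choose (k - (d + 1)) := by
  calc ∑ s ∈ (univ : Finset V).powersetCard k, starCount d (G.induce (s : Set V))
      = ∑ v, ∑ L ∈ (G.neighborFinset v).powersetCard d,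
          #{s ∈ univ.powersetCard k | insert v L ⊆ s} := by
        simp_rw [starCount_induce_coe, card_filter]
        rw [sum_comm]
        exact sum_congr rfl fun v _ => sum_comm
    _ = ∑ v, ∑ L ∈ (G.neighborFinset v).powersetCard d,
          (Fintype.card V - (d + 1)).choose (k - (d + 1)) := by
        refine sum_congr rfl fun v _ => sum_congr rfl fun L hL => ?_
        have hcard : #(insert v L) = d + 1 := by
          rw [mem_powersetCard] at hL
          rw [card_insert_of_notMem fun hv => G.irrefl (mem_neighborFinset .. |>.1 (hL.1 hv)),
            hL.2]
        rw [card_filter_powersetCard_subset _ _ _ (subset_univ _) (by omega), hcard, card_univ]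
    _ = starCount d G * (Fintype.card V - (d + 1)).choose (k - (d + 1)) := by
        simp [starCount, sum_mul, ndeg_eq_degree]

end

namespace SameDeck

variable {n k : ℕ} {G H : SimpleGraph (Fin n)}

theorem sum_starCount_induce_eq (h : SameDeck G H k) (d : ℕ) :
    ∑ s ∈ (univ : Finset (Fin n)).powersetCard k, starCount d (G.induce (s : Set (Fin n)))
      = ∑ s ∈ (univ : Finset (Fin n)).powersetCard k,
          starCount d (H.induce (s : Set (Fin n))) := by
  obtain ⟨φ, hφ⟩ := h
  rw [sum_subtype _ (fun _ => mem_powersetCard_univ),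
    sum_subtype _ (fun _ => mem_powersetCard_univ)]
  exact Fintype.sum_equiv φ _ _ fun s => starCount_congr (hφ s).some d

theorem starCount_eq (h : SameDeck G H k) (hk : k ≤ n) {d : ℕ} (hd : d < k) :
    starCount d G = starCount d H := by
  classical
  have hsum := h.sum_starCount_induce_eq d
  rw [sum_starCount_induce G hd, sum_starCount_induce H hd] at hsum
  exact Nat.eq_of_mul_eq_mul_right (Nat.choose_pos (by rw [Fintype.card_fin]; omega)) hsum

end SameDeck

theorem degree_list_determined_general (n ℓ : ℕ)
    (G H : SimpleGraph (Fin n))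
    (hdeck : SameDeck G H (n - ℓ))
    (hbig : ∀ i : ℕ, n - ℓ ≤ i →
      Nat.card {v : Fin n // ndeg G v = i} = Nat.card {v : Fin n // ndeg H v = i}) :
    Finset.univ.val.map (ndeg G) = Finset.univ.val.map (ndeg H) := by
  refine Multiset.eq_of_sum_map_choose_eq_of_count_eq (k := n - ℓ) (fun d hd => ?_) fun i hi => ?_
  · rw [sum_map_choose_map_ndeg, sum_map_choose_map_ndeg]
    exact hdeck.starCount_eq (Nat.sub_le n ℓ) hd
  · rw [count_map_ndeg, count_map_ndeg]
    exact hbig i hi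

/-- Manvel: if `G` and `H` are triangle-free, have the same `(n-ℓ)`-deck, and have the
same number of vertices of degree `i` for each `i ≥ n-ℓ`, then they have the same
degree list (multiset of vertex degrees). -/
theorem degree_list_determined (n ℓ : ℕ) (hℓ : 1 ≤ ℓ) (hn : ℓ < n)
    (G H : SimpleGraph (Fin n))
    (hGtf : ∀ (v : Fin n) (c : G.Walk v v), c.IsCycle → c.length ≠ 3)
    (hHtf : ∀ (v : Fin n) (c : H.Walk v v), c.IsCycle → c.length ≠ 3)
    (hdeck : SameDeck G H (n - ℓ))
    (hbig : ∀ i : ℕ, n - ℓ ≤ i →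
      Nat.card {v : Fin n // ndeg G v = i} = Nat.card {v : Fin n // ndeg H v = i}) :
    Finset.univ.val.map (ndeg G) = Finset.univ.val.map (ndeg H) :=
  degree_list_determined_general n ℓ G H hdeck hbig
end

section
/- Let n and ℓ be positive integers with n ≥ 2ℓ+2. If F is an acyclic n-vertex simple graph, H is an n-vertex simple graph containing a cycle, and F and H have the same (n−ℓ)-deck, then no card of F has radius at most 1; in particular no card is a star, and the minimum radius k̂ among cards satisfies k̂ > 1. -/
open SimpleGraph

/-- A star: one vertex (the hub) adjacent to all other vertices, and no other edges. -/
def IsStar {V : Type*} (A : SimpleGraph V) : Prop :=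
  ∃ c : V, (∀ v : V, v ≠ c → A.Adj c v) ∧ ∀ u v : V, A.Adj u v → u = c ∨ v = c

/-!
Suppose a card of the forest `F` on `k = n - ℓ` vertices has a vertex adjacent to all the
others (as it does if its radius is at most `1` or it is a star). Its partner card in `H` then
has a vertex `c` with `k - 1` neighbours. Every `k`-card of `H` is isomorphic to a card of `F`,
hence acyclic, so every cycle of `H` has more than `k` edges. Counting edges over the `k`-deck
(Kelly's lemma) gives `e(H) = e(F) ≤ n - 1`, whereas the edges at `c` together with the at least
`k - 1` edges of a cycle avoiding `c` give `e(H) ≥ 2k - 2 ≥ n`.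
-/

open Finset

theorem List.countP_or_le {α : Type*} (p q : α → Bool) (l : List α) :
    l.countP (fun a => p a || q a) ≤ l.countP p + l.countP q := by
  induction l with
  | nil => simp
  | cons a l ih =>
    simp only [List.countP_cons]
    cases p a <;> cases q a <;> simp <;> omega

namespace SimpleGraph

variable {V : Type*}

def HasDominatingVertex (G : SimpleGraph V) : Prop :=
  ∃ c, ∀ v, c ≠ v → G.Adj c v

lemma hasDominatingVertex_of_gradius_le_one {G : SimpleGraph V} (h : gradius G ≤ 1) :
    G.HasDominatingVertex := by
  have hrad : gradius G = G.radius := rfl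
  cases isEmpty_or_nonempty V
  · simp [hrad, radius_eq_top_of_isEmpty] at h
  obtain ⟨c, hc⟩ := G.exists_eccent_eq_radius
  exact ⟨c, (G.eccent_le_one_iff c).1 (hc ▸ hrad ▸ h)⟩

lemma Iso.hasDominatingVertex {W : Type*} {G : SimpleGraph V} {G' : SimpleGraph W}
    (e : G ≃g G') (h : G.HasDominatingVertex) : G'.HasDominatingVertex := by
  obtain ⟨c, hc⟩ := h
  refine ⟨e c, fun v hv => ?_⟩
  simpa using e.map_adj_iff.2 (hc (e.symm v) (by rintro rfl; simp at hv))

lemma IsAcyclic.card_edgeFinset_lt [Fintype V] [Nonempty V] {G : SimpleGraph V}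
    [Fintype G.edgeSet] (hG : G.IsAcyclic) : #G.edgeFinset < Fintype.card V := by
  classical
  obtain ⟨T, hGT, -, hT⟩ := connected_top.exists_isTree_le_of_le_of_isAcyclic le_top hG
  have := hT.card_edgeFinset
  have := card_le_card (edgeFinset_mono hGT)
  omega

lemma Walk.IsCycle.countP_mem_edges_le_two [DecidableEq V] {G : SimpleGraph V} {u : V}
    {p : G.Walk u u} (hp : p.IsCycle) (c : V) : p.edges.countP (c ∈ ·) ≤ 2 := by
  have hcount : p.support.tail.count c ≤ 1 := by
    rw [List.Nodup.count hp.support_nodup]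
    split <;> omega
  have hperm := (p.tail_support_perm_dropLast_support).count_eq c
  calc p.edges.countP (c ∈ ·)
      = p.darts.countP (fun d => d.fst = c || d.snd = c) := by
        simp [Walk.edges, List.countP_map, Function.comp_def, Dart.edge, Sym2.mem_iff, eq_comm]
    _ ≤ p.darts.countP (·.fst = c) + p.darts.countP (·.snd = c) := List.countP_or_le _ _ _
    _ = p.support.dropLast.count c + p.support.tail.count c := by
        simp [← p.map_fst_darts, ← p.map_snd_darts, List.count_eq_countP, Function.comp_def,
          beq_eq_decide]
    _ ≤ 2 := by omega

lemma card_add_length_le_card_edgeFinset_add_two [DecidableEq V]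
    {G : SimpleGraph V} [Fintype G.edgeSet] {c : V} {t : Finset V} (ht : ∀ x ∈ t, G.Adj c x)
    {u : V} {p : G.Walk u u} (hp : p.IsCycle) : #t + p.length ≤ #G.edgeFinset + 2 := by
  set star := t.image (s(c, ·))
  set rim := (p.edges.filter (c ∉ ·)).toFinset
  have hstar : #star = #t := card_image_of_injective _ fun _ _ => Sym2.congr_right.mp
  have hrim : #rim + p.edges.countP (c ∈ ·) = p.length := by
    rw [List.toFinset_card_of_nodup (hp.edges_nodup.filter _), ← List.countP_eq_length_filter,
      add_comm, ← p.length_edges, List.length_eq_countP_add_countP (c ∈ ·)]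
    simp
  have hdisj : Disjoint star rim := by
    rw [Finset.disjoint_left]
    rintro _ hstar hrim
    obtain ⟨x, -, rfl⟩ := mem_image.1 hstar
    simpa using (List.mem_filter.1 (List.mem_toFinset.1 hrim)).2
  have hsub : star ∪ rim ⊆ G.edgeFinset := by
    refine union_subset (fun e he => ?_) (fun e he => ?_) <;> rw [mem_edgeFinset]
    · obtain ⟨x, hx, rfl⟩ := mem_image.1 he
      exact ht x hx
    · exact p.edges_subset_edgeSet (List.mem_filter.1 (List.mem_toFinset.1 he)).1
  have := card_le_card hsub
  rw [card_union_of_disjoint hdisj] at this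
  have := hp.countP_mem_edges_le_two c
  omega

lemma Walk.IsCycle.lt_length_of_forall_isAcyclic_induce [Fintype V] {G : SimpleGraph V} {k : ℕ}
    (hk : k ≤ Fintype.card V) (hG : ∀ s : Finset V, #s = k → (G.induce ↑s).IsAcyclic)
    {u : V} {p : G.Walk u u} (hp : p.IsCycle) : k < p.length := by
  classical
  by_contra! hle
  have hsupp : #p.support.toFinset ≤ k := calc
    #p.support.toFinset = #p.support.tail.toFinset := by
      rw [← p.cons_tail_support, List.tail_cons, List.toFinset_cons,
        insert_eq_of_mem (List.mem_toFinset.2 (p.end_mem_tail_support hp.not_nil))]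
    _ ≤ p.support.tail.length := List.toFinset_card_le _
    _ = p.length := by simp
    _ ≤ k := hle
  obtain ⟨s, hps, -, hs⟩ := exists_subsuperset_card_eq (subset_univ _) hsupp (by simpa using hk)
  have hw : ∀ x ∈ p.support, x ∈ (s : Set V) := fun x hx => hps (List.mem_toFinset.2 hx)
  refine hG s hs (p.induce _ hw) ?_
  rwa [← Walk.isCycle_map_iff_of_injective (f := (Embedding.induce (s : Set V)).toHom)
    Subtype.val_injective, Walk.map_induce]

theorem sum_card_edgeFinset_induce [Fintype V] [DecidableEq V] (G : SimpleGraph V)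
    [DecidableRel G.Adj] {k : ℕ} (hk : 2 ≤ k) :
    ∑ s ∈ (univ : Finset V).powersetCard k, #(G.induce (s : Set V)).edgeFinset =
      #G.edgeFinset * (Fintype.card V - 2).choose (k - 2) := calc
  _ = ∑ s ∈ univ.powersetCard k, #{e ∈ G.edgeFinset | e.toFinset ⊆ s} := by
    simp only [card_filter_edgeFinset_toFinset_subset]
  _ = ∑ e ∈ G.edgeFinset, #{s ∈ univ.powersetCard k | e.toFinset ⊆ s} := by
    simp only [card_filter]
    exact sum_comm
  _ = ∑ _e ∈ G.edgeFinset, (Fintype.card V - 2).choose (k - 2) := by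
    refine sum_congr rfl fun e he => ?_
    have he2 : #e.toFinset = 2 :=
      Sym2.card_toFinset_of_not_isDiag e (G.not_isDiag_of_mem_edgeSet (mem_edgeFinset.1 he))
    rw [card_filter_powersetCard_subset _ _ _ (subset_univ _) (he2 ▸ hk), he2, card_univ]
  _ = _ := by rw [sum_const, smul_eq_mul]

end SimpleGraph

namespace SameDeck

variable {n k : ℕ} {F H : SimpleGraph (Fin n)}

lemma forall_isAcyclic_induce (h : SameDeck F H k) (hF : F.IsAcyclic) (t : Finset (Fin n))
    (ht : #t = k) : (H.induce ↑t).IsAcyclic := by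
  obtain ⟨φ, hφ⟩ := h
  obtain ⟨e⟩ := hφ (φ.symm ⟨t, ht⟩)
  rw [φ.apply_symm_apply] at e
  exact e.isAcyclic_iff.1 (hF.induce _)

lemma card_edgeFinset_eq [DecidableRel F.Adj] [DecidableRel H.Adj] (h : SameDeck F H k)
    (hk : 2 ≤ k) (hkn : k ≤ n) : #F.edgeFinset = #H.edgeFinset := by
  obtain ⟨φ, hφ⟩ := h
  refine Nat.eq_of_mul_eq_mul_right
    (Nat.choose_pos (by simp; omega : k - 2 ≤ Fintype.card (Fin n) - 2)) ?_
  rw [← sum_card_edgeFinset_induce F hk, ← sum_card_edgeFinset_induce H hk,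
    sum_subtype _ (p := fun s => #s = k) (by simp), sum_subtype _ (p := fun s => #s = k) (by simp)]
  exact Fintype.sum_equiv φ _ _ fun s => (hφ s).some.card_edgeFinset_eq

lemma exists_adj_of_hasDominatingVertex_induce (h : SameDeck F H k) {s : Finset (Fin n)}
    (hs : #s = k) (hdom : (F.induce (s : Set (Fin n))).HasDominatingVertex) :
    ∃ c, ∃ t : Finset (Fin n), #t + 1 = k ∧ ∀ x ∈ t, H.Adj c x := by
  obtain ⟨φ, hφ⟩ := h
  obtain ⟨e⟩ := hφ ⟨s, hs⟩
  obtain ⟨c, hc⟩ := e.hasDominatingVertex hdom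
  refine ⟨c, (φ ⟨s, hs⟩).1.erase c, ?_, fun x hx => ?_⟩
  · rw [card_erase_add_one c.2, (φ ⟨s, hs⟩).2]
  · obtain ⟨hxc, hx⟩ := mem_erase.1 hx
    exact hc ⟨x, hx⟩ fun hcx => hxc (congrArg Subtype.val hcx).symm

theorem not_hasDominatingVertex_induce {ℓ : ℕ} (hdeck : SameDeck F H (n - ℓ))
    (hn : 2 * ℓ + 2 ≤ n) (hF : F.IsAcyclic) (hH : ¬ H.IsAcyclic) {s : Finset (Fin n)}
    (hs : #s = n - ℓ) : ¬ (F.induce (s : Set (Fin n))).HasDominatingVertex := by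
  classical
  intro hdom
  obtain ⟨c, t, ht, hadj⟩ := hdeck.exists_adj_of_hasDominatingVertex_induce hs hdom
  obtain ⟨u, p, hp⟩ : ∃ u, ∃ p : H.Walk u u, p.IsCycle := by simpa [IsAcyclic] using hH
  have hlen :=
    hp.lt_length_of_forall_isAcyclic_induce (by simp) (hdeck.forall_isAcyclic_induce hF)
  have hH_edges := card_add_length_le_card_edgeFinset_add_two hadj hp
  have hFH := hdeck.card_edgeFinset_eq (by omega) (by omega)
  have : Nonempty (Fin n) := ⟨⟨0, by omega⟩⟩
  have hF_edges := hF.card_edgeFinset_lt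
  simp only [Fintype.card_fin] at hF_edges
  omega

end SameDeck

theorem no_card_radius_le_one_general (n ℓ : ℕ) (hn : 2 * ℓ + 2 ≤ n)
    (F H : SimpleGraph (Fin n)) (hF : F.IsAcyclic) (hH : ¬ H.IsAcyclic)
    (hdeck : SameDeck F H (n - ℓ)) :
    (∀ s : Finset (Fin n), s.card = n - ℓ →
      ¬ gradius (SimpleGraph.induce (↑s : Set (Fin n)) F) ≤ 1) ∧
    (∀ s : Finset (Fin n), s.card = n - ℓ →
      ¬ IsStar (SimpleGraph.induce (↑s : Set (Fin n)) F)) := by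
  refine ⟨fun s hs hrad => ?_, fun s hs hstar => ?_⟩
  · exact hdeck.not_hasDominatingVertex_induce hn hF hH hs
      (SimpleGraph.hasDominatingVertex_of_gradius_le_one hrad)
  · obtain ⟨c, hc, -⟩ := hstar
    exact hdeck.not_hasDominatingVertex_induce hn hF hH hs ⟨c, fun v hv => hc v hv.symm⟩

/-- For `n ≥ 2ℓ+2`, if `F` is acyclic, `H` contains a cycle, and they have the same
`(n-ℓ)`-deck, then no card of `F` has radius at most `1`; in particular no card is a
star, so the minimum radius among cards is greater than `1`. -/
theorem no_card_radius_le_one (n ℓ : ℕ) (hℓ : 1 ≤ ℓ) (hn : 2 * ℓ + 2 ≤ n)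
    (F H : SimpleGraph (Fin n)) (hF : F.IsAcyclic) (hH : ¬ H.IsAcyclic)
    (hdeck : SameDeck F H (n - ℓ)) :
    (∀ s : Finset (Fin n), s.card = n - ℓ →
      ¬ gradius (SimpleGraph.induce (↑s : Set (Fin n)) F) ≤ 1) ∧
    (∀ s : Finset (Fin n), s.card = n - ℓ →
      ¬ IsStar (SimpleGraph.induce (↑s : Set (Fin n)) F)) :=
  no_card_radius_le_one_general n ℓ hn F H hF hH hdeck
end
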